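/- arXiv:2003.11758 — 13 statements merged into one kernel-verified Lean document; each statement's English description precedes it below -/
import Mathlib

section
/- Under the BAXG setup, for every iteration count k ≥ 1 and every y ∈ 𝒳 one has g(x_k) − g(y) + ⟨Q y, x_k − y⟩ ≤ 4 L ‖y − x_0‖² / k². -/
open scoped RealInnerProductSpace

set_option maxHeartbeats 1600000 in
/-- Under the BAXG setup, for every iteration count `k ≥ 1` and every
`y ∈ 𝒳` one has `g (x k) - g y + ⟪Q y, x k - y⟫ ≤ 4 L ‖y - x 0‖² / k²`. -/
theorem baxg_convergence_rate
    {E : Type*} [NormedAddCommGroup E] [InnerProductSpace ℝ E] [CompleteSpace E]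
    (𝒳 : Set E) (hXconv : Convex ℝ 𝒳)
    (L : ℝ) (hL : 0 < L)
    (g : E → ℝ) (g' : E → E)
    (hgdiff : ∀ x : E, HasGradientAt g (g' x) x)
    (hgconv : ∀ x y : E, g x + ⟪g' x, y - x⟫ ≤ g y)
    (hgLip : ∀ x y : E, ‖g' x - g' y‖ ≤ L * ‖x - y‖)
    (Q : E →ₗ[ℝ] E) (hQ : ∀ u : E, ⟪Q u, u⟫ = 0)
    (A a : ℕ → ℝ)
    (hA : ∀ k : ℕ, A k = (k : ℝ) ^ 2 / (4 * L))
    (ha : ∀ k : ℕ, 1 ≤ k → a k = A k - A (k - 1))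
    (x z zhat xhat : ℕ → E)
    (hx0z0 : x 0 = z 0)
    (hxX : ∀ i, x i ∈ 𝒳) (hzX : ∀ i, z i ∈ 𝒳)
    (hzhatX : ∀ i, zhat i ∈ 𝒳) (hxhatX : ∀ i, xhat i ∈ 𝒳)
    (hxhat : ∀ i : ℕ, 1 ≤ i →
      xhat (i - 1) = (A (i - 1) / A i) • x (i - 1) + (a i / A i) • z (i - 1))
    (hsub : ∀ i : ℕ, 1 ≤ i → ∀ z' ∈ 𝒳,
      a i * ⟪g' (xhat (i - 1)) + Q (z (i - 1)) +
          (Q (zhat i - z (i - 1)) + (2 / a i) • (zhat i - z (i - 1))), zhat i - z'⟫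
        - (1 / 2) * (‖zhat i - z (i - 1)‖ ^ 2 + ‖zhat i - z'‖ ^ 2) ≤ 0)
    (hxi : ∀ i : ℕ, 1 ≤ i →
      x i = xhat (i - 1) + (a i / A i) • (zhat i - z (i - 1)))
    (hopt : ∀ i : ℕ, 1 ≤ i → ∀ x' ∈ 𝒳,
      ⟪(∑ j ∈ Finset.Icc 1 i, a j • (g' (x j) + Q (zhat j))) + (2 : ℝ) • (z i - x 0),
        x' - z i⟫ ≥ 0)
    (k : ℕ) (hk : 1 ≤ k) (y : E) (hy : y ∈ 𝒳) :
    g (x k) - g y + ⟪Q y, x k - y⟫ ≤ 4 * L * ‖y - x 0‖ ^ 2 / (k : ℝ) ^ 2 := by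
  have hL4 : (0:ℝ) < 4 * L := by linarith
  have hAnonneg : ∀ i : ℕ, 0 ≤ A i := by
    intro i; rw [hA]; positivity
  have hApos : ∀ i : ℕ, 1 ≤ i → 0 < A i := by
    intro i hi
    rw [hA]
    have h1 : (1:ℝ) ≤ (i:ℝ) := by exact_mod_cast hi
    apply div_pos (by nlinarith) hL4
  have hacast : ∀ i : ℕ, 1 ≤ i → a i = (2*(i:ℝ) - 1) / (4*L) := by
    intro i hi
    rw [ha i hi, hA, hA, Nat.cast_sub hi, Nat.cast_one]
    ring
  have hapos : ∀ i : ℕ, 1 ≤ i → 0 < a i := by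
    intro i hi
    rw [hacast i hi]
    have h1 : (1:ℝ) ≤ (i:ℝ) := by exact_mod_cast hi
    apply div_pos (by linarith) hL4
  have hLa2 : ∀ i : ℕ, 1 ≤ i → L * (a i)^2 ≤ A i := by
    intro i hi
    have h1 : (1:ℝ) ≤ (i:ℝ) := by exact_mod_cast hi
    rw [hacast i hi, hA]
    have key : (2*(i:ℝ)-1)^2 ≤ 4 * (i:ℝ)^2 := by nlinarith
    have h4 : L * ((2*(i:ℝ)-1)/(4*L))^2 = (2*(i:ℝ)-1)^2 / (16*L) := by
      field_simp; ring
    rw [h4]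
    rw [div_le_div_iff₀ (by linarith) hL4]
    nlinarith
  -- skew symmetry consequence
  have hQdiag : ∀ u v : E, ⟪Q u, u - v⟫ = ⟪Q v, u - v⟫ := by
    intro u v
    have h1 := hQ (u - v)
    rw [map_sub, inner_sub_left] at h1
    linarith
  -- key algebraic identity
  have hkey : ∀ i : ℕ, 1 ≤ i → A i • x i = A (i-1) • x (i-1) + a i • zhat i := by
    intro i hi
    have hAi : A i ≠ 0 := (hApos i hi).ne'
    rw [hxi i hi, hxhat i hi]
    match_scalars <;> field_simp <;> ring
  -- the dual-averaging vectors
  set s : ℕ → E := fun i => a i • (g' (x i) + Q (zhat i)) with hs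
  -- Part 1 : A k * Gap ≤ ∑ ⟪s i, zhat i - y⟫
  have part1 : ∀ n : ℕ, A n * (g (x n) - g y + ⟪Q y, x n - y⟫)
      ≤ ∑ i ∈ Finset.Icc 1 n, ⟪s i, zhat i - y⟫ := by
    intro n
    induction n with
    | zero =>
      have h0 : A 0 = 0 := by rw [hA]; norm_num
      rw [h0, Finset.Icc_eq_empty (by omega), Finset.sum_empty]
      norm_num
    | succ n ih =>
      have hm : 1 ≤ n + 1 := by omega
      have hAn := hAnonneg n
      have ham := hapos (n+1) hm
      have haeq : a (n+1) = A (n+1) - A n := by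
        have h := ha (n+1) hm; simpa using h
      have hAmeq : A (n+1) = A n + a (n+1) := by linarith
      have hvec0 : A (n+1) • x (n+1) = A n • x n + a (n+1) • zhat (n+1) := by
        have h := hkey (n+1) hm; simpa using h
      have hv1 : A n • (x (n+1) - x n) + a (n+1) • (x (n+1) - y)
          = a (n+1) • (zhat (n+1) - y) := by
        have h2 : A n • x (n+1) + a (n+1) • x (n+1) = A n • x n + a (n+1) • zhat (n+1) := by
          rw [← add_smul, ← hAmeq]; exact hvec0
        have h3 : (A n • (x (n+1) - x n) + a (n+1) • (x (n+1) - y)) - a (n+1) • (zhat (n+1) - y)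
            = (A n • x (n+1) + a (n+1) • x (n+1)) - (A n • x n + a (n+1) • zhat (n+1)) := by
          simp only [smul_sub]; abel
        rw [h2, sub_self] at h3
        exact sub_eq_zero.mp h3
      have hv2 : A (n+1) • (x (n+1) - y) - A n • (x n - y) = a (n+1) • (zhat (n+1) - y) := by
        have h3 : (A (n+1) • (x (n+1) - y) - A n • (x n - y)) - a (n+1) • (zhat (n+1) - y)
            = (A (n+1) • x (n+1) - (A n • x n + a (n+1) • zhat (n+1)))
              + (A n • y + a (n+1) • y - A (n+1) • y) := by
          simp only [smul_sub]; abel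
        have e1 : A (n+1) • x (n+1) - (A n • x n + a (n+1) • zhat (n+1)) = 0 := by
          rw [hvec0, sub_self]
        have e2 : A n • y + a (n+1) • y - A (n+1) • y = 0 := by
          rw [← add_smul, ← hAmeq, sub_self]
        rw [e1, e2, add_zero] at h3
        exact sub_eq_zero.mp h3
      have eg : A n * ⟪g' (x (n+1)), x (n+1) - x n⟫ + a (n+1) * ⟪g' (x (n+1)), x (n+1) - y⟫
          = a (n+1) * ⟪g' (x (n+1)), zhat (n+1) - y⟫ := by
        rw [← real_inner_smul_right, ← real_inner_smul_right, ← real_inner_smul_right,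
          ← inner_add_right, hv1]
      have eQ : A (n+1) * ⟪Q y, x (n+1) - y⟫ - A n * ⟪Q y, x n - y⟫
          = a (n+1) * ⟪Q y, zhat (n+1) - y⟫ := by
        rw [← real_inner_smul_right, ← real_inner_smul_right, ← real_inner_smul_right,
          ← inner_sub_right, hv2]
      have eQy : a (n+1) * ⟪Q y, zhat (n+1) - y⟫
          = a (n+1) * ⟪Q (zhat (n+1)), zhat (n+1) - y⟫ := by
        rw [(hQdiag (zhat (n+1)) y).symm]
      have es : ⟪s (n+1), zhat (n+1) - y⟫
          = a (n+1) * ⟪g' (x (n+1)), zhat (n+1) - y⟫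
            + a (n+1) * ⟪Q (zhat (n+1)), zhat (n+1) - y⟫ := by
        simp only [hs]
        rw [real_inner_smul_left, inner_add_left]; ring
      have hc1 : A n * (g (x (n+1)) - g (x n)) ≤ A n * ⟪g' (x (n+1)), x (n+1) - x n⟫ := by
        apply mul_le_mul_of_nonneg_left _ hAn
        have h := hgconv (x (n+1)) (x n)
        have h2 : ⟪g' (x (n+1)), x n - x (n+1)⟫ = -⟪g' (x (n+1)), x (n+1) - x n⟫ := by
          rw [← inner_neg_right]; congr 1; abel
        linarith
      have hc2 : a (n+1) * (g (x (n+1)) - g y) ≤ a (n+1) * ⟪g' (x (n+1)), x (n+1) - y⟫ := by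
        apply mul_le_mul_of_nonneg_left _ ham.le
        have h := hgconv (x (n+1)) y
        have h2 : ⟪g' (x (n+1)), y - x (n+1)⟫ = -⟪g' (x (n+1)), x (n+1) - y⟫ := by
          rw [← inner_neg_right]; congr 1; abel
        linarith
      rw [Finset.sum_Icc_succ_top hm]
      rw [hAmeq] at eQ ⊢
      nlinarith [ih, eg, eQ, eQy, es, hc1, hc2]
  -- Part 2 per-step: ⟪s i, zhat i - z i⟫ ≤ ‖z i - z (i-1)‖²
  have part2step : ∀ i : ℕ, 1 ≤ i → ⟪s i, zhat i - z i⟫ ≤ ‖z i - z (i-1)‖^2 := by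
    intro i hi
    have hai := hapos i hi
    have hAi := hApos i hi
    have hsub' := hsub i hi (z i) (hzX i)
    have hQsum : Q (z (i-1)) + Q (zhat i - z (i-1)) = Q (zhat i) := by
      rw [← map_add]; congr 1; abel
    have hexp : ⟪g' (xhat (i-1)) + Q (z (i-1)) +
          (Q (zhat i - z (i-1)) + (2 / a i) • (zhat i - z (i-1))), zhat i - z i⟫
        = ⟪g' (xhat (i-1)), zhat i - z i⟫ + ⟪Q (zhat i), zhat i - z i⟫
          + (2 / a i) * ⟪zhat i - z (i-1), zhat i - z i⟫ := by
      rw [inner_add_left, inner_add_left, inner_add_left, real_inner_smul_left, ← hQsum,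
        inner_add_left]
      ring
    rw [hexp] at hsub'
    have hmul : a i * (⟪g' (xhat (i-1)), zhat i - z i⟫ + ⟪Q (zhat i), zhat i - z i⟫
          + (2 / a i) * ⟪zhat i - z (i-1), zhat i - z i⟫)
        = a i * ⟪g' (xhat (i-1)), zhat i - z i⟫ + a i * ⟪Q (zhat i), zhat i - z i⟫
          + 2 * ⟪zhat i - z (i-1), zhat i - z i⟫ := by
      field_simp
    rw [hmul] at hsub'
    -- Lipschitz bound
    have hxdiff : x i - xhat (i-1) = (a i / A i) • (zhat i - z (i-1)) := by
      rw [hxi i hi]; abel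
    have hlip : a i * ‖g' (x i) - g' (xhat (i-1))‖ ≤ ‖zhat i - z (i-1)‖ := by
      have h1 := hgLip (x i) (xhat (i-1))
      rw [hxdiff, norm_smul, Real.norm_eq_abs, abs_of_pos (div_pos hai hAi)] at h1
      have h2 : a i * ‖g' (x i) - g' (xhat (i-1))‖
          ≤ a i * (L * (a i / A i * ‖zhat i - z (i-1)‖)) :=
        mul_le_mul_of_nonneg_left h1 hai.le
      have h4 : a i * (L * (a i / A i * ‖zhat i - z (i-1)‖))
          = (L * (a i)^2 / A i) * ‖zhat i - z (i-1)‖ := by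
        field_simp
      have h5 : L * (a i)^2 / A i ≤ 1 := by
        rw [div_le_one hAi]; exact hLa2 i hi
      have h6 : (L * (a i)^2 / A i) * ‖zhat i - z (i-1)‖ ≤ 1 * ‖zhat i - z (i-1)‖ :=
        mul_le_mul_of_nonneg_right h5 (norm_nonneg _)
      rw [h4] at h2
      rw [one_mul] at h6
      linarith
    have hsdec : ⟪s i, zhat i - z i⟫
        = a i * ⟪g' (x i), zhat i - z i⟫ + a i * ⟪Q (zhat i), zhat i - z i⟫ := by
      simp only [hs]
      rw [real_inner_smul_left, inner_add_left]; ring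
    have hdelta : a i * ⟪g' (x i), zhat i - z i⟫ = a i * ⟪g' (xhat (i-1)), zhat i - z i⟫
        + a i * ⟪g' (x i) - g' (xhat (i-1)), zhat i - z i⟫ := by
      rw [inner_sub_left]; ring
    have hCS : ⟪g' (x i) - g' (xhat (i-1)), zhat i - z i⟫
        ≤ ‖g' (x i) - g' (xhat (i-1))‖ * ‖zhat i - z i‖ := real_inner_le_norm _ _
    have hCS' : a i * ⟪g' (x i) - g' (xhat (i-1)), zhat i - z i⟫
        ≤ (a i * ‖g' (x i) - g' (xhat (i-1))‖) * ‖zhat i - z i‖ := by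
      have := mul_le_mul_of_nonneg_left hCS hai.le
      linarith [this]
    have hCS'' : (a i * ‖g' (x i) - g' (xhat (i-1))‖) * ‖zhat i - z i‖
        ≤ ‖zhat i - z (i-1)‖ * ‖zhat i - z i‖ :=
      mul_le_mul_of_nonneg_right hlip (norm_nonneg _)
    have hAM : ‖zhat i - z (i-1)‖ * ‖zhat i - z i‖
        ≤ (1/2) * ‖zhat i - z (i-1)‖^2 + (1/2) * ‖zhat i - z i‖^2 := by
      nlinarith [sq_nonneg (‖zhat i - z (i-1)‖ - ‖zhat i - z i‖)]
    have hnormc : ‖z i - z (i-1)‖^2 = ‖zhat i - z (i-1)‖^2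
        - 2*⟪zhat i - z (i-1), zhat i - z i⟫ + ‖zhat i - z i‖^2 := by
      have hv : z i - z (i-1) = (zhat i - z (i-1)) - (zhat i - z i) := by abel
      rw [hv, norm_sub_sq_real]
    linarith [hsub', hsdec, hdelta, hCS', hCS'', hAM, hnormc]
  -- Dual averaging induction
  set Svec : ℕ → E := fun n => ∑ j ∈ Finset.Icc 1 n, s j with hSvec
  have hDA : ∀ n : ℕ, ∑ j ∈ Finset.Icc 1 n, (⟪s j, z j⟫ + ‖z j - z (j-1)‖^2)
      ≤ ⟪Svec n, z n⟫ + ‖z n - x 0‖^2 := by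
    intro n
    induction n with
    | zero =>
      have h0 : Finset.Icc 1 0 = (∅ : Finset ℕ) := Finset.Icc_eq_empty (by omega)
      simp only [hSvec, h0, Finset.sum_empty, inner_zero_left]
      rw [hx0z0, sub_self, norm_zero]
      norm_num
    | succ n ih =>
      have hm : 1 ≤ n + 1 := by omega
      have hsplit : ∑ j ∈ Finset.Icc 1 (n+1), (⟪s j, z j⟫ + ‖z j - z (j-1)‖^2)
          = (∑ j ∈ Finset.Icc 1 n, (⟪s j, z j⟫ + ‖z j - z (j-1)‖^2))
            + (⟪s (n+1), z (n+1)⟫ + ‖z (n+1) - z n‖^2) := by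
        rw [Finset.sum_Icc_succ_top hm]
        simp only [Nat.add_sub_cancel]
      have hSsplit : Svec (n+1) = Svec n + s (n+1) := by
        simp only [hSvec]
        rw [Finset.sum_Icc_succ_top hm]
      have hSinner : ⟪Svec (n+1), z (n+1)⟫ = ⟪Svec n, z (n+1)⟫ + ⟪s (n+1), z (n+1)⟫ := by
        rw [hSsplit, inner_add_left]
      have hnormid : ‖z (n+1) - x 0‖^2 = ‖z n - x 0‖^2
          + 2*⟪z n - x 0, z (n+1) - z n⟫ + ‖z (n+1) - z n‖^2 := by
        have hv : z (n+1) - x 0 = (z n - x 0) + (z (n+1) - z n) := by abel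
        rw [hv, norm_add_sq_real]
      have hkeystep : ⟪Svec n, z n⟫ + ‖z n - x 0‖^2 + ‖z (n+1) - z n‖^2
          ≤ ⟪Svec n, z (n+1)⟫ + ‖z (n+1) - x 0‖^2 := by
        rcases Nat.eq_zero_or_pos n with hn0 | hn1
        · subst hn0
          have h0 : Svec 0 = (0:E) := by
            simp only [hSvec, Finset.Icc_eq_empty (by omega : ¬(1:ℕ) ≤ 0), Finset.sum_empty]
          have hz0 : z 0 - x 0 = 0 := by rw [hx0z0, sub_self]
          rw [h0, inner_zero_left, inner_zero_left, hz0, norm_zero]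
          rw [hz0, inner_zero_left, norm_zero] at hnormid
          linarith
        · have hoo := hopt n hn1 (z (n+1)) (hzX (n+1))
          have hSeq : (∑ j ∈ Finset.Icc 1 n, a j • (g' (x j) + Q (zhat j))) = Svec n := by
            simp only [hSvec, hs]
          rw [hSeq, inner_add_left, real_inner_smul_left] at hoo
          have e : ⟪Svec n, z (n+1) - z n⟫ = ⟪Svec n, z (n+1)⟫ - ⟪Svec n, z n⟫ :=
            inner_sub_right _ _ _
          rw [e] at hoo
          linarith
      linarith [hsplit, hSinner, ih, hkeystep]
  -- final optimality at y
  have hfin := hopt k hk y hy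
  have hSeqk : (∑ j ∈ Finset.Icc 1 k, a j • (g' (x j) + Q (zhat j))) = Svec k := by
    simp only [hSvec, hs]
  rw [hSeqk, inner_add_left, real_inner_smul_left] at hfin
  have efin : ⟪Svec k, y - z k⟫ = ⟪Svec k, y⟫ - ⟪Svec k, z k⟫ := inner_sub_right _ _ _
  rw [efin] at hfin
  have hnormy : ‖y - x 0‖^2 = ‖z k - x 0‖^2 + 2*⟪z k - x 0, y - z k⟫ + ‖y - z k‖^2 := by
    have hv : y - x 0 = (z k - x 0) + (y - z k) := by abel
    rw [hv, norm_add_sq_real]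
  have hterm : ∀ j ∈ Finset.Icc 1 k, ⟪s j, zhat j - y⟫
      ≤ (⟪s j, z j⟫ + ‖z j - z (j-1)‖^2) - ⟪s j, y⟫ := by
    intro j hj
    rw [Finset.mem_Icc] at hj
    have h1 := part2step j hj.1
    have h2 : ⟪s j, zhat j - y⟫ = ⟪s j, zhat j - z j⟫ + ⟪s j, z j⟫ - ⟪s j, y⟫ := by
      rw [inner_sub_right, inner_sub_right]; ring
    linarith
  have hsum1 := Finset.sum_le_sum hterm
  have hsum2 : ∑ j ∈ Finset.Icc 1 k, ((⟪s j, z j⟫ + ‖z j - z (j-1)‖^2) - ⟪s j, y⟫)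
      = (∑ j ∈ Finset.Icc 1 k, (⟪s j, z j⟫ + ‖z j - z (j-1)‖^2)) - ⟪Svec k, y⟫ := by
    rw [Finset.sum_sub_distrib]
    congr 1
    simp only [hSvec]
    exact (sum_inner _ _ _).symm
  have hchain : A k * (g (x k) - g y + ⟪Q y, x k - y⟫) ≤ ‖y - x 0‖^2 := by
    have h1 := part1 k
    have h2 := hDA k
    rw [hsum2] at hsum1
    linarith [sq_nonneg ‖y - z k‖]
  have hk2 : (0:ℝ) < (k:ℝ)^2 := by
    have h1 : (1:ℝ) ≤ (k:ℝ) := by exact_mod_cast hk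
    nlinarith
  rw [le_div_iff₀ hk2]
  have hAkval : A k = (k:ℝ)^2 / (4*L) := hA k
  have h1 : (4*L) * (A k * (g (x k) - g y + ⟪Q y, x k - y⟫)) ≤ (4*L) * ‖y - x 0‖^2 :=
    mul_le_mul_of_nonneg_left hchain hL4.le
  have h2 : (4*L) * (A k * (g (x k) - g y + ⟪Q y, x k - y⟫))
      = (g (x k) - g y + ⟪Q y, x k - y⟫) * (k:ℝ)^2 := by
    rw [hAkval]
    field_simp
  linarith
end

section
/- Under the BAXG setup, for every ε > 0, every y ∈ 𝒳, and every iteration count k ≥ 2‖y − x_0‖·√(L/ε), one has g(x_k) − g(y) + ⟨Q y, x_k − y⟩ ≤ ε; that is, BAXG produces an ε-accurate solution of the mixed variational inequality within O(1/√ε) outer iterations. -/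
open scoped RealInnerProductSpace

set_option maxHeartbeats 1000000 in
/-- Under the BAXG setup, for every `ε > 0`, every `y ∈ 𝒳`, and every
iteration count `k ≥ 2‖y − x₀‖·√(L/ε)`, one has
`g (x k) − g y + ⟪Q y, x k − y⟫ ≤ ε`. -/
theorem baxg_eps_accurate
    {E : Type*} [NormedAddCommGroup E] [InnerProductSpace ℝ E] [CompleteSpace E]
    (𝒳 : Set E) (hXconv : Convex ℝ 𝒳)
    (L : ℝ) (hL : 0 < L)
    (g : E → ℝ) (g' : E → E)
    (hgdiff : ∀ x : E, HasGradientAt g (g' x) x)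
    (hgconv : ∀ x y : E, g x + ⟪g' x, y - x⟫ ≤ g y)
    (hgLip : ∀ x y : E, ‖g' x - g' y‖ ≤ L * ‖x - y‖)
    (Q : E →ₗ[ℝ] E) (hQ : ∀ u : E, ⟪Q u, u⟫ = 0)
    (A a : ℕ → ℝ)
    (hA : ∀ k : ℕ, A k = (k : ℝ) ^ 2 / (4 * L))
    (ha : ∀ k : ℕ, 1 ≤ k → a k = A k - A (k - 1))
    (x z zhat xhat : ℕ → E)
    (hx0z0 : x 0 = z 0)
    (hxX : ∀ i, x i ∈ 𝒳) (hzX : ∀ i, z i ∈ 𝒳)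
    (hzhatX : ∀ i, zhat i ∈ 𝒳) (hxhatX : ∀ i, xhat i ∈ 𝒳)
    (hxhat : ∀ i : ℕ, 1 ≤ i →
      xhat (i - 1) = (A (i - 1) / A i) • x (i - 1) + (a i / A i) • z (i - 1))
    (hsub : ∀ i : ℕ, 1 ≤ i → ∀ z' ∈ 𝒳,
      a i * ⟪g' (xhat (i - 1)) + Q (z (i - 1)) +
          (Q (zhat i - z (i - 1)) + (2 / a i) • (zhat i - z (i - 1))), zhat i - z'⟫
        - (1 / 2) * (‖zhat i - z (i - 1)‖ ^ 2 + ‖zhat i - z'‖ ^ 2) ≤ 0)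
    (hxi : ∀ i : ℕ, 1 ≤ i →
      x i = xhat (i - 1) + (a i / A i) • (zhat i - z (i - 1)))
    (hopt : ∀ i : ℕ, 1 ≤ i → ∀ x' ∈ 𝒳,
      ⟪(∑ j ∈ Finset.Icc 1 i, a j • (g' (x j) + Q (zhat j))) + (2 : ℝ) • (z i - x 0),
        x' - z i⟫ ≥ 0)
    (ε : ℝ) (hε : 0 < ε) (y : E) (hy : y ∈ 𝒳) (k : ℕ)
    (hk : (k : ℝ) ≥ 2 * ‖y - x 0‖ * Real.sqrt (L / ε)) :
    g (x k) - g y + ⟪Q y, x k - y⟫ ≤ ε := by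
  have hQswap : ∀ u v : E, ⟪Q v, u - v⟫ = ⟪Q u, u - v⟫ := by
    intro u v
    have h := hQ (u - v)
    rw [map_sub, inner_sub_left] at h
    linarith
  -- case k = 0
  rcases Nat.eq_zero_or_pos k with hk0 | hkpos
  · subst hk0
    have hsq : 0 < Real.sqrt (L / ε) := Real.sqrt_pos.mpr (div_pos hL hε)
    have hn0 : ‖y - x 0‖ = 0 := by
      have hnn : 0 ≤ ‖y - x 0‖ := norm_nonneg _
      by_contra hne
      have h1 : 0 < ‖y - x 0‖ := lt_of_le_of_ne hnn (Ne.symm hne)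
      have h2 : (0:ℝ) < 2 * ‖y - x 0‖ * Real.sqrt (L / ε) := by positivity
      simp only [Nat.cast_zero] at hk
      linarith
    have hyx : y = x 0 := sub_eq_zero.mp (norm_eq_zero.mp hn0)
    rw [hyx]
    simp [hQ]
    linarith
  -- main case k ≥ 1
  have hIcc0 : Finset.Icc 1 0 = (∅ : Finset ℕ) := Finset.Icc_eq_empty (by omega)
  -- numeric facts
  have hApos : ∀ i : ℕ, 1 ≤ i → 0 < A i := by
    intro i hi
    have h1 : (1:ℝ) ≤ (i:ℝ) := by exact_mod_cast hi
    rw [hA]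
    have : (0:ℝ) < (i:ℝ)^2 := by nlinarith
    positivity
  have hacast : ∀ i : ℕ, 1 ≤ i → a i = (2*(i:ℝ) - 1)/(4*L) := by
    intro i hi
    have hcast : ((i - 1 : ℕ) : ℝ) = (i:ℝ) - 1 := by
      have := Nat.cast_sub hi (R := ℝ); simpa using this
    rw [ha i hi, hA, hA, hcast]
    field_simp
    ring
  have hapos : ∀ i : ℕ, 1 ≤ i → 0 < a i := by
    intro i hi
    have h1 : (1:ℝ) ≤ (i:ℝ) := by exact_mod_cast hi
    rw [hacast i hi]
    have : (0:ℝ) < 2*(i:ℝ) - 1 := by linarith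
    positivity
  have haA : ∀ i : ℕ, 1 ≤ i → a i ^ 2 * L ≤ A i := by
    intro i hi
    have h1 : (1:ℝ) ≤ (i:ℝ) := by exact_mod_cast hi
    rw [hacast i hi, hA, div_pow, div_mul_eq_mul_div,
      div_le_div_iff₀ (by positivity) (by positivity)]
    nlinarith
  have hAa : ∀ i : ℕ, 1 ≤ i → A i = A (i - 1) + a i := by
    intro i hi
    rw [ha i hi]; ring
  have hA1nn : ∀ i : ℕ, 0 ≤ A i := by
    intro i; rw [hA]; positivity
  -- key recurrence
  have hxrec : ∀ i : ℕ, 1 ≤ i → A i • x i = A (i-1) • x (i-1) + a i • zhat i := by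
    intro i hi
    have hAne : A i ≠ 0 := ne_of_gt (hApos i hi)
    rw [hxi i hi, hxhat i hi]
    match_scalars <;> field_simp <;> ring
  -- primal per-step inequality
  have hPstep : ∀ i : ℕ, 1 ≤ i →
      A i * (g (x i) - g y + ⟪Q y, x i - y⟫)
        - A (i-1) * (g (x (i-1)) - g y + ⟪Q y, x (i-1) - y⟫)
        ≤ a i * ⟪g' (x i) + Q (zhat i), zhat i - y⟫ := by
    intro i hi
    have hrec := hxrec i hi
    have hAaeq := hAa i hi
    have hv : A i • (x i - y) = A (i-1) • (x (i-1) - y) + a i • (zhat i - y) := by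
      rw [smul_sub, smul_sub, smul_sub, hrec, hAaeq, add_smul]
      abel
    have hv2 : A (i-1) • (x (i-1) - x i) + a i • (y - x i)
        = -(a i • (zhat i - y)) := by
      have h3 : A (i-1) • (x (i-1) - x i) + a i • (y - x i)
          = A (i-1) • x (i-1) + a i • y - A i • x i := by
        rw [hAaeq, add_smul, smul_sub, smul_sub]; abel
      rw [h3, hrec, smul_sub]
      abel
    have eQ : A i * ⟪Q y, x i - y⟫ - A (i-1) * ⟪Q y, x (i-1) - y⟫
        = a i * ⟪Q (zhat i), zhat i - y⟫ := by
      have h4 : ⟪Q y, A i • (x i - y)⟫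
          = ⟪Q y, A (i-1) • (x (i-1) - y) + a i • (zhat i - y)⟫ := by rw [hv]
      rw [inner_add_right, real_inner_smul_right, real_inner_smul_right,
        real_inner_smul_right] at h4
      have h5 : ⟪Q y, zhat i - y⟫ = ⟪Q (zhat i), zhat i - y⟫ := hQswap (zhat i) y
      rw [h5] at h4
      linarith
    have e1 : A (i-1) * ⟪g' (x i), x (i-1) - x i⟫ + a i * ⟪g' (x i), y - x i⟫
        = -(a i * ⟪g' (x i), zhat i - y⟫) := by
      have h6 : ⟪g' (x i), A (i-1) • (x (i-1) - x i) + a i • (y - x i)⟫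
          = ⟪g' (x i), -(a i • (zhat i - y))⟫ := by rw [hv2]
      rw [inner_add_right, real_inner_smul_right, real_inner_smul_right,
        inner_neg_right, real_inner_smul_right] at h6
      linarith
    have c1 : A (i-1) * (g (x i) + ⟪g' (x i), x (i-1) - x i⟫)
        ≤ A (i-1) * g (x (i-1)) :=
      mul_le_mul_of_nonneg_left (hgconv (x i) (x (i-1))) (hA1nn (i-1))
    have c2 : a i * (g (x i) + ⟪g' (x i), y - x i⟫) ≤ a i * g y :=
      mul_le_mul_of_nonneg_left (hgconv (x i) y) (le_of_lt (hapos i hi))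
    have hsinner : (⟪g' (x i) + Q (zhat i), zhat i - y⟫ : ℝ)
        = ⟪g' (x i), zhat i - y⟫ + ⟪Q (zhat i), zhat i - y⟫ :=
      inner_add_left _ _ _
    rw [hsinner, hAaeq]
    rw [hAaeq] at eQ
    nlinarith [c1, c2, e1, eQ]
  -- primal telescoping
  have hPrimal : ∀ n : ℕ,
      A n * (g (x n) - g y + ⟪Q y, x n - y⟫)
        ≤ ∑ i ∈ Finset.Icc 1 n, a i * ⟪g' (x i) + Q (zhat i), zhat i - y⟫ := by
    intro n
    induction n with
    | zero =>
      rw [hIcc0, Finset.sum_empty, hA 0]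
      norm_num
    | succ n ih =>
      rw [Finset.sum_Icc_succ_top (Nat.one_le_iff_ne_zero.mpr (Nat.succ_ne_zero n))]
      have hstep := hPstep (n+1) (Nat.le_add_left 1 n)
      simp only [Nat.add_sub_cancel] at hstep
      linarith
  -- dual per-step inequality
  have hDstep : ∀ i : ℕ, 1 ≤ i →
      a i * ⟪g' (x i) + Q (zhat i), zhat i - z i⟫ ≤ ‖z i - z (i-1)‖^2 := by
    intro i hi
    have hap := hapos i hi
    have hapne : a i ≠ 0 := ne_of_gt hap
    have h := hsub i hi (z i) (hzX i)
    have hvec : g' (xhat (i - 1)) + Q (z (i - 1)) +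
          (Q (zhat i - z (i - 1)) + (2 / a i) • (zhat i - z (i - 1)))
        = (g' (xhat (i-1)) + Q (zhat i)) + (2 / a i) • (zhat i - z (i-1)) := by
      rw [map_sub]; abel
    rw [hvec, inner_add_left, real_inner_smul_left] at h
    have hcancel : a i * (2 / a i * ⟪zhat i - z (i-1), zhat i - z i⟫)
        = 2 * ⟪zhat i - z (i-1), zhat i - z i⟫ := by
      field_simp
    have h2 : a i * ⟪g' (xhat (i-1)) + Q (zhat i), zhat i - z i⟫
        + 2 * ⟪zhat i - z (i-1), zhat i - z i⟫
        ≤ (1/2) * (‖zhat i - z (i-1)‖^2 + ‖zhat i - z i‖^2) := by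
      nlinarith [h, hcancel]
    have hxdiff : x i - xhat (i-1) = (a i / A i) • (zhat i - z (i-1)) := by
      rw [hxi i hi]; abel
    have hnx : ‖x i - xhat (i-1)‖ = (a i / A i) * ‖zhat i - z (i-1)‖ := by
      rw [hxdiff, norm_smul, Real.norm_eq_abs,
        abs_of_nonneg (le_of_lt (div_pos hap (hApos i hi)))]
    have hlip : ‖g' (x i) - g' (xhat (i-1))‖
        ≤ L * ((a i / A i) * ‖zhat i - z (i-1)‖) := by
      rw [← hnx]; exact hgLip _ _
    have hcs := real_inner_le_norm (g' (x i) - g' (xhat (i-1))) (zhat i - z i)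
    have hb : a i * ⟪g' (x i) - g' (xhat (i-1)), zhat i - z i⟫
        ≤ a i * (L * ((a i / A i) * ‖zhat i - z (i-1)‖) * ‖zhat i - z i‖) := by
      apply mul_le_mul_of_nonneg_left _ (le_of_lt hap)
      calc ⟪g' (x i) - g' (xhat (i-1)), zhat i - z i⟫
          ≤ ‖g' (x i) - g' (xhat (i-1))‖ * ‖zhat i - z i‖ := hcs
        _ ≤ L * ((a i / A i) * ‖zhat i - z (i-1)‖) * ‖zhat i - z i‖ :=
            mul_le_mul_of_nonneg_right hlip (norm_nonneg _)
    have hAne : A i ≠ 0 := ne_of_gt (hApos i hi)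
    have hcoef : a i * (L * ((a i / A i) * ‖zhat i - z (i-1)‖) * ‖zhat i - z i‖)
        = (a i ^ 2 * L / A i) * (‖zhat i - z (i-1)‖ * ‖zhat i - z i‖) := by
      field_simp
    have hco1 : a i ^ 2 * L / A i ≤ 1 := (div_le_one (hApos i hi)).mpr (haA i hi)
    have hdelta : a i * ⟪g' (x i) - g' (xhat (i-1)), zhat i - z i⟫
        ≤ ‖zhat i - z (i-1)‖ * ‖zhat i - z i‖ := by
      have h3 : (a i ^ 2 * L / A i) * (‖zhat i - z (i-1)‖ * ‖zhat i - z i‖)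
          ≤ 1 * (‖zhat i - z (i-1)‖ * ‖zhat i - z i‖) :=
        mul_le_mul_of_nonneg_right hco1 (by positivity)
      rw [hcoef] at hb
      linarith
    have hsd : a i * ⟪g' (x i) + Q (zhat i), zhat i - z i⟫
        = a i * ⟪g' (xhat (i-1)) + Q (zhat i), zhat i - z i⟫
          + a i * ⟪g' (x i) - g' (xhat (i-1)), zhat i - z i⟫ := by
      have hse : g' (x i) + Q (zhat i)
          = (g' (xhat (i-1)) + Q (zhat i)) + (g' (x i) - g' (xhat (i-1))) := by
        abel
      rw [hse, inner_add_left]; ring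
    have hnormid : ‖z i - z (i-1)‖^2
        = ‖zhat i - z (i-1)‖^2 - 2*⟪zhat i - z (i-1), zhat i - z i⟫
          + ‖zhat i - z i‖^2 := by
      have huv : z i - z (i-1) = (zhat i - z (i-1)) - (zhat i - z i) := by abel
      rw [huv, norm_sub_sq_real]
    nlinarith [hsd, h2, hdelta,
      sq_nonneg (‖zhat i - z (i-1)‖ - ‖zhat i - z i‖), hnormid]
  -- strong minimality of z i
  have hmin : ∀ i : ℕ, ∀ x' ∈ 𝒳,
      (⟪(∑ j ∈ Finset.Icc 1 i, a j • (g' (x j) + Q (zhat j))), z i⟫ + ‖z i - x 0‖^2)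
          + ‖x' - z i‖^2
        ≤ ⟪(∑ j ∈ Finset.Icc 1 i, a j • (g' (x j) + Q (zhat j))), x'⟫
          + ‖x' - x 0‖^2 := by
    intro i x' hx'
    rcases Nat.eq_zero_or_pos i with h0 | h1
    · subst h0
      rw [hIcc0, Finset.sum_empty]
      have hz0 : z 0 = x 0 := hx0z0.symm
      rw [hz0]
      simp
    · have h := hopt i h1 x' hx'
      rw [inner_add_left, real_inner_smul_left] at h
      have hS' : (⟪(∑ j ∈ Finset.Icc 1 i, a j • (g' (x j) + Q (zhat j))), x' - z i⟫ : ℝ)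
          = ⟪(∑ j ∈ Finset.Icc 1 i, a j • (g' (x j) + Q (zhat j))), x'⟫
            - ⟪(∑ j ∈ Finset.Icc 1 i, a j • (g' (x j) + Q (zhat j))), z i⟫ :=
        inner_sub_right _ _ _
      have hcomm : (⟪z i - x 0, x' - z i⟫ : ℝ) = ⟪x' - z i, z i - x 0⟫ :=
        real_inner_comm _ _
      have hexp : ‖x' - x 0‖^2
          = ‖x' - z i‖^2 + 2*⟪x' - z i, z i - x 0⟫ + ‖z i - x 0‖^2 := by
        have hd : x' - x 0 = (x' - z i) + (z i - x 0) := by abel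
        rw [hd, norm_add_sq_real]
      linarith [h, hS', hcomm, hexp]
  -- dual averaging telescoping
  have hD2 : ∀ n : ℕ,
      ∑ j ∈ Finset.Icc 1 n, (a j * ⟪g' (x j) + Q (zhat j), z j⟫ + ‖z j - z (j-1)‖^2)
        ≤ ⟪(∑ j ∈ Finset.Icc 1 n, a j • (g' (x j) + Q (zhat j))), z n⟫
          + ‖z n - x 0‖^2 := by
    intro n
    induction n with
    | zero =>
      rw [hIcc0, Finset.sum_empty, Finset.sum_empty, ← hx0z0]
      simp
    | succ n ih =>
      have hSrec : (∑ j ∈ Finset.Icc 1 (n+1), a j • (g' (x j) + Q (zhat j)))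
          = (∑ j ∈ Finset.Icc 1 n, a j • (g' (x j) + Q (zhat j)))
            + a (n+1) • (g' (x (n+1)) + Q (zhat (n+1))) :=
        Finset.sum_Icc_succ_top (Nat.one_le_iff_ne_zero.mpr (Nat.succ_ne_zero n)) _
      have hm := hmin n (z (n+1)) (hzX (n+1))
      rw [Finset.sum_Icc_succ_top (Nat.one_le_iff_ne_zero.mpr (Nat.succ_ne_zero n))]
      simp only [Nat.add_sub_cancel]
      have hrhs : (⟪(∑ j ∈ Finset.Icc 1 (n+1), a j • (g' (x j) + Q (zhat j))),
            z (n+1)⟫ : ℝ)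
          = ⟪(∑ j ∈ Finset.Icc 1 n, a j • (g' (x j) + Q (zhat j))), z (n+1)⟫
            + a (n+1) * ⟪g' (x (n+1)) + Q (zhat (n+1)), z (n+1)⟫ := by
        rw [hSrec]
        rw [inner_add_left]
        rw [real_inner_smul_left]
      rw [hrhs]
      linarith [hm, ih]
  -- final dual bound
  have hSky : (⟪(∑ j ∈ Finset.Icc 1 k, a j • (g' (x j) + Q (zhat j))), y⟫ : ℝ)
      = ∑ i ∈ Finset.Icc 1 k, a i * ⟪g' (x i) + Q (zhat i), y⟫ := by
    rw [sum_inner]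
    exact Finset.sum_congr rfl (fun i _ => real_inner_smul_left _ _ _)
  have hDualFinal :
      ∑ i ∈ Finset.Icc 1 k, a i * ⟪g' (x i) + Q (zhat i), z i - y⟫
        ≤ ‖y - x 0‖^2 - ∑ i ∈ Finset.Icc 1 k, ‖z i - z (i-1)‖^2 := by
    have hm := hmin k y hy
    have hsplit : ∑ i ∈ Finset.Icc 1 k, a i * ⟪g' (x i) + Q (zhat i), z i - y⟫
        = ∑ i ∈ Finset.Icc 1 k, a i * ⟪g' (x i) + Q (zhat i), z i⟫
          - ∑ i ∈ Finset.Icc 1 k, a i * ⟪g' (x i) + Q (zhat i), y⟫ := by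
      rw [← Finset.sum_sub_distrib]
      apply Finset.sum_congr rfl
      intro i _
      rw [inner_sub_right]
      ring
    have hsum := hD2 k
    rw [Finset.sum_add_distrib] at hsum
    have hnn : 0 ≤ ‖y - z k‖^2 := by positivity
    linarith [hsplit, hsum, hm, hSky]
  -- combine
  have hMain : A k * (g (x k) - g y + ⟪Q y, x k - y⟫) ≤ ‖y - x 0‖^2 := by
    have hP := hPrimal k
    have hsplit2 : ∑ i ∈ Finset.Icc 1 k, a i * ⟪g' (x i) + Q (zhat i), zhat i - y⟫
        = ∑ i ∈ Finset.Icc 1 k, a i * ⟪g' (x i) + Q (zhat i), zhat i - z i⟫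
          + ∑ i ∈ Finset.Icc 1 k, a i * ⟪g' (x i) + Q (zhat i), z i - y⟫ := by
      rw [← Finset.sum_add_distrib]
      apply Finset.sum_congr rfl
      intro i _
      have hd : zhat i - y = (zhat i - z i) + (z i - y) := by abel
      rw [hd, inner_add_right]
      ring
    have hDsum : ∑ i ∈ Finset.Icc 1 k, a i * ⟪g' (x i) + Q (zhat i), zhat i - z i⟫
        ≤ ∑ i ∈ Finset.Icc 1 k, ‖z i - z (i-1)‖^2 := by
      apply Finset.sum_le_sum
      intro i hi
      exact hDstep i (Finset.mem_Icc.mp hi).1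
    linarith [hP, hsplit2, hDsum, hDualFinal]
  -- final arithmetic
  have hk1 : (1:ℝ) ≤ (k:ℝ) := by exact_mod_cast hkpos
  have hsqr : Real.sqrt (L / ε) ^ 2 = L / ε := Real.sq_sqrt (le_of_lt (div_pos hL hε))
  have hRnn : 0 ≤ ‖y - x 0‖ := norm_nonneg _
  have hεne : ε ≠ 0 := ne_of_gt hε
  have hLne : L ≠ 0 := ne_of_gt hL
  have hk2 : (k:ℝ)^2 ≥ 4 * ‖y - x 0‖^2 * (L / ε) := by
    have h2 : (2 * ‖y - x 0‖ * Real.sqrt (L / ε))^2 ≤ (k:ℝ)^2 := by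
      have hnn : (0:ℝ) ≤ 2 * ‖y - x 0‖ * Real.sqrt (L / ε) := by positivity
      have hknn : (0:ℝ) ≤ (k:ℝ) := Nat.cast_nonneg k
      exact sq_le_sq' (by linarith) hk
    calc (k:ℝ)^2 ≥ (2 * ‖y - x 0‖ * Real.sqrt (L / ε))^2 := h2
      _ = 4 * ‖y - x 0‖^2 * (L / ε) := by rw [mul_pow, mul_pow, hsqr]; ring
  rw [hA k] at hMain
  have hkpos' : (0:ℝ) < (k:ℝ)^2 := by nlinarith
  have hM2 : (k:ℝ)^2 * (g (x k) - g y + ⟪Q y, x k - y⟫) ≤ 4 * L * ‖y - x 0‖^2 := by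
    have h7 := mul_le_mul_of_nonneg_left hMain
      (le_of_lt (by positivity : (0:ℝ) < 4 * L))
    calc (k:ℝ)^2 * (g (x k) - g y + ⟪Q y, x k - y⟫)
        = 4 * L * ((k:ℝ)^2 / (4*L) * (g (x k) - g y + ⟪Q y, x k - y⟫)) := by
          field_simp
      _ ≤ 4 * L * ‖y - x 0‖^2 := h7
  have hLe : 4 * L * ‖y - x 0‖^2 ≤ ε * (k:ℝ)^2 := by
    have h5 : 4 * ‖y - x 0‖^2 * (L/ε) * ε ≤ (k:ℝ)^2 * ε :=
      mul_le_mul_of_nonneg_right hk2 (le_of_lt hε)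
    have h6 : 4 * ‖y - x 0‖^2 * (L/ε) * ε = 4 * L * ‖y - x 0‖^2 := by
      field_simp
    linarith
  have hgoal : (g (x k) - g y + ⟪Q y, x k - y⟫) * (k:ℝ)^2 ≤ ε * (k:ℝ)^2 := by
    nlinarith [hM2, hLe]
  exact le_of_mul_le_mul_right hgoal hkpos'
end

section
/- The estimate function evaluated at z_k is bounded above by ψ_k(z_k) ≤ A_k g(y) + ‖y − x_0‖². -/
open scoped RealInnerProductSpace

/-- The estimate function evaluated at `z_k` is bounded above:
`ψ_k (z k) ≤ A_k g(y) + ‖y − x₀‖²`. -/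
theorem estimate_sequence_upper_bound
    {E : Type*} [NormedAddCommGroup E] [InnerProductSpace ℝ E] [CompleteSpace E]
    (𝒳 : Set E) (hXconv : Convex ℝ 𝒳)
    (g : E → ℝ) (g' : E → E)
    (hgdiff : ∀ x : E, HasGradientAt g (g' x) x)
    (hgconv : ∀ x y : E, g x + ⟪g' x, y - x⟫ ≤ g y)
    (Q : E →ₗ[ℝ] E)
    (k : ℕ) (hk : 1 ≤ k)
    (a : ℕ → ℝ) (hapos : ∀ i ∈ Finset.Icc 1 k, 0 < a i)
    (Ak : ℝ) (hAk : Ak = ∑ i ∈ Finset.Icc 1 k, a i)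
    (x0 : E) (hx0 : x0 ∈ 𝒳)
    (x zhat : ℕ → E)
    (y : E) (hy : y ∈ 𝒳)
    (ψ : E → ℝ)
    (hψ : ∀ w : E, ψ w =
      (∑ i ∈ Finset.Icc 1 k,
        a i * (g (x i) + ⟪g' (x i), w - x i⟫ + ⟪Q (zhat i), w - y⟫)) + ‖w - x0‖ ^ 2)
    (zk : E) (hzkX : zk ∈ 𝒳)
    (hopt : ∀ w ∈ 𝒳,
      ⟪(∑ i ∈ Finset.Icc 1 k, a i • (g' (x i) + Q (zhat i))) + (2 : ℝ) • (zk - x0),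
        w - zk⟫ ≥ 0) :
    ψ zk ≤ Ak * g y + ‖y - x0‖ ^ 2 := by
  have h1 := hopt y hy
  -- Step 1: ψ zk ≤ ψ y
  have hsum : (∑ i ∈ Finset.Icc 1 k,
        a i * (g (x i) + ⟪g' (x i), y - x i⟫ + ⟪Q (zhat i), y - y⟫))
      - (∑ i ∈ Finset.Icc 1 k,
        a i * (g (x i) + ⟪g' (x i), zk - x i⟫ + ⟪Q (zhat i), zk - y⟫))
      = ⟪∑ i ∈ Finset.Icc 1 k, a i • (g' (x i) + Q (zhat i)), y - zk⟫ := by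
    rw [sum_inner, ← Finset.sum_sub_distrib]
    apply Finset.sum_congr rfl
    intro i _
    simp only [real_inner_smul_left, inner_add_left, inner_sub_right]
    ring
  have hnorm : ‖y - x0‖ ^ 2 - ‖zk - x0‖ ^ 2
      ≥ ⟪(2 : ℝ) • (zk - x0), y - zk⟫ := by
    have h2 : y - x0 = (zk - x0) + (y - zk) := by abel
    rw [h2, norm_add_sq_real, real_inner_smul_left]
    nlinarith [sq_nonneg ‖y - zk‖]
  have hstep1 : ψ zk ≤ ψ y := by
    rw [hψ y, hψ zk]
    rw [inner_add_left] at h1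
    linarith [hsum, hnorm, h1]
  -- Step 2: ψ y ≤ Ak * g y + ‖y - x0‖ ^ 2
  have hstep2 : ψ y ≤ Ak * g y + ‖y - x0‖ ^ 2 := by
    rw [hψ y, hAk, Finset.sum_mul]
    have hle : (∑ i ∈ Finset.Icc 1 k,
        a i * (g (x i) + ⟪g' (x i), y - x i⟫ + ⟪Q (zhat i), y - y⟫))
        ≤ ∑ i ∈ Finset.Icc 1 k, a i * g y := by
      refine Finset.sum_le_sum fun i hi => ?_
      have hg := hgconv (x i) y
      have ha := (hapos i hi).le
      simp only [sub_self, inner_zero_right, add_zero]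
      exact mul_le_mul_of_nonneg_left hg ha
    linarith
  linarith
end

section
/- For every k ≥ 1 and every y ∈ 𝒳, one has A_k (g(x_k) + ⟨Q y, x_k − y⟩) ≤ ψ_k(z_k) + Σ_{i=1}^k E_i, where E_i = a_i ⟨∇g(x_i) + Q ẑ_i, ẑ_i − z_i⟩ − ‖z_i − z_{i−1}‖². -/
open scoped RealInnerProductSpace

private lemma sq_norm_decomp_aux {E : Type*} [NormedAddCommGroup E] [InnerProductSpace ℝ E]
    (u v : E) : ‖u‖ ^ 2 = ‖v‖ ^ 2 + ⟪(2 : ℝ) • v, u - v⟫ + ‖u - v‖ ^ 2 := by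
  rw [real_inner_smul_left, inner_sub_right, norm_sub_sq_real, real_inner_self_eq_norm_sq,
    real_inner_comm]
  ring

/-- For every `k ≥ 1` and every `y ∈ 𝒳`,
`A_k (g(x_k) + ⟪Q y, x_k − y⟫) ≤ ψ_k(z_k) + Σ_{i=1}^k E_i`, where
`E_i = a_i ⟪∇g(x_i) + Q ẑ_i, ẑ_i − z_i⟫ − ‖z_i − z_{i−1}‖²`. -/
theorem estimate_sequence_lower_bound
    {E : Type*} [NormedAddCommGroup E] [InnerProductSpace ℝ E] [CompleteSpace E]
    (𝒳 : Set E) (hXconv : Convex ℝ 𝒳)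
    (L : ℝ) (hL : 0 < L)
    (g : E → ℝ) (g' : E → E)
    (hgdiff : ∀ x : E, HasGradientAt g (g' x) x)
    (hgconv : ∀ x y : E, g x + ⟪g' x, y - x⟫ ≤ g y)
    (hgLip : ∀ x y : E, ‖g' x - g' y‖ ≤ L * ‖x - y‖)
    (Q : E →ₗ[ℝ] E) (hQ : ∀ u : E, ⟪Q u, u⟫ = 0)
    (A a : ℕ → ℝ)
    (hA : ∀ k : ℕ, A k = (k : ℝ) ^ 2 / (4 * L))
    (ha : ∀ k : ℕ, 1 ≤ k → a k = A k - A (k - 1))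
    (x z zhat xhat : ℕ → E)
    (hx0z0 : x 0 = z 0)
    (hxX : ∀ i, x i ∈ 𝒳) (hzX : ∀ i, z i ∈ 𝒳)
    (hzhatX : ∀ i, zhat i ∈ 𝒳) (hxhatX : ∀ i, xhat i ∈ 𝒳)
    (hxhat : ∀ i : ℕ, 1 ≤ i →
      xhat (i - 1) = (A (i - 1) / A i) • x (i - 1) + (a i / A i) • z (i - 1))
    (hsub : ∀ i : ℕ, 1 ≤ i → ∀ z' ∈ 𝒳,
      a i * ⟪g' (xhat (i - 1)) + Q (z (i - 1)) +
          (Q (zhat i - z (i - 1)) + (2 / a i) • (zhat i - z (i - 1))), zhat i - z'⟫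
        - (1 / 2) * (‖zhat i - z (i - 1)‖ ^ 2 + ‖zhat i - z'‖ ^ 2) ≤ 0)
    (hxi : ∀ i : ℕ, 1 ≤ i →
      x i = xhat (i - 1) + (a i / A i) • (zhat i - z (i - 1)))
    (hopt : ∀ i : ℕ, 1 ≤ i → ∀ x' ∈ 𝒳,
      ⟪(∑ j ∈ Finset.Icc 1 i, a j • (g' (x j) + Q (zhat j))) + (2 : ℝ) • (z i - x 0),
        x' - z i⟫ ≥ 0)
    (ψ : ℕ → E → E → ℝ)
    (hψ : ∀ (k : ℕ) (y w : E), ψ k y w =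
      (∑ i ∈ Finset.Icc 1 k,
        a i * (g (x i) + ⟪g' (x i), w - x i⟫ + ⟪Q (zhat i), w - y⟫)) + ‖w - x 0‖ ^ 2)
    (k : ℕ) (hk : 1 ≤ k) (y : E) (hy : y ∈ 𝒳) :
    A k * (g (x k) + ⟪Q y, x k - y⟫) ≤
      ψ k y (z k) +
        ∑ i ∈ Finset.Icc 1 k,
          (a i * ⟪g' (x i) + Q (zhat i), zhat i - z i⟫ - ‖z i - z (i - 1)‖ ^ 2) := by
  -- Q is antisymmetric
  have hanti : ∀ u v : E, ⟪Q u, v⟫ = -⟪Q v, u⟫ := by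
    intro u v
    have h := hQ (u + v)
    simp only [map_add, inner_add_left, inner_add_right, hQ] at h
    linarith
  -- we prove the statement for all m by induction
  suffices H : ∀ m : ℕ, A m * (g (x m) + ⟪Q y, x m - y⟫) ≤
      ψ m y (z m) + ∑ i ∈ Finset.Icc 1 m,
        (a i * ⟪g' (x i) + Q (zhat i), zhat i - z i⟫ - ‖z i - z (i - 1)‖ ^ 2) from H k
  intro m
  induction m with
  | zero =>
    simp [hψ, hA, hx0z0]
  | succ n ih =>
    have hn1 : 1 ≤ n + 1 := by omega
    have hAk_pos : 0 < A (n + 1) := by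
      rw [hA]; positivity
    have hAk0 : A (n + 1) ≠ 0 := hAk_pos.ne'
    have hAn_nonneg : 0 ≤ A n := by rw [hA]; positivity
    have hak : a (n + 1) = A (n + 1) - A n := by
      have := ha (n + 1) hn1; simpa using this
    have hxi' := hxi (n + 1) hn1
    have hxhat' := hxhat (n + 1) hn1
    simp only [Nat.add_sub_cancel] at hxi' hxhat'
    -- key vector identity
    have hkey : A (n + 1) • x (n + 1) = A n • x n + a (n + 1) • zhat (n + 1) := by
      have c1 : A (n + 1) * (A n / A (n + 1)) = A n := by field_simp
      have c2 : A (n + 1) * (a (n + 1) / A (n + 1)) = a (n + 1) := by field_simp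
      rw [hxi', hxhat', smul_add, smul_add, smul_smul, smul_smul, smul_smul, c1, c2,
        smul_sub]
      abel
    set S : E := ∑ j ∈ Finset.Icc 1 n, a j • (g' (x j) + Q (zhat j)) with hS
    have hgrad : (0 : ℝ) ≤ ⟪S + (2 : ℝ) • (z n - x 0), z (n + 1) - z n⟫ := by
      rcases Nat.eq_zero_or_pos n with h0 | hpos
      · subst h0
        simp [hS, hx0z0]
      · exact hopt n hpos (z (n + 1)) (hzX (n + 1))
    have hψdiff : ψ n y (z (n + 1)) = ψ n y (z n) +
        ⟪S + (2 : ℝ) • (z n - x 0), z (n + 1) - z n⟫ + ‖z (n + 1) - z n‖ ^ 2 := by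
      rw [hψ, hψ, inner_add_left, hS, sum_inner]
      have hterm : ∀ j ∈ Finset.Icc 1 n,
          ⟪a j • (g' (x j) + Q (zhat j)), z (n + 1) - z n⟫ =
            a j * (g (x j) + ⟪g' (x j), z (n + 1) - x j⟫ + ⟪Q (zhat j), z (n + 1) - y⟫)
              - a j * (g (x j) + ⟪g' (x j), z n - x j⟫ + ⟪Q (zhat j), z n - y⟫) := by
        intro j _
        simp only [real_inner_smul_left, inner_add_left, inner_sub_right]
        ring
      rw [Finset.sum_congr rfl hterm, Finset.sum_sub_distrib]
      have hnorm : ‖z (n + 1) - x 0‖ ^ 2 = ‖z n - x 0‖ ^ 2 +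
          ⟪(2 : ℝ) • (z n - x 0), z (n + 1) - z n⟫ + ‖z (n + 1) - z n‖ ^ 2 := by
        have h1 : z (n + 1) - z n = (z (n + 1) - x 0) - (z n - x 0) := by abel
        rw [h1]
        exact sq_norm_decomp_aux (z (n + 1) - x 0) (z n - x 0)
      rw [hnorm]; ring
    -- split the sums at n+1
    rw [Finset.sum_Icc_succ_top hn1]
    have hψsplit : ψ (n + 1) y (z (n + 1)) = ψ n y (z (n + 1)) +
        a (n + 1) * (g (x (n + 1)) + ⟪g' (x (n + 1)), z (n + 1) - x (n + 1)⟫ +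
          ⟪Q (zhat (n + 1)), z (n + 1) - y⟫) := by
      rw [hψ, hψ, Finset.sum_Icc_succ_top hn1]; ring
    simp only [Nat.add_sub_cancel]
    -- the E-term plus norm plus linearization simplifies
    have heq1 : ‖z (n + 1) - z n‖ ^ 2 +
        a (n + 1) * (g (x (n + 1)) + ⟪g' (x (n + 1)), z (n + 1) - x (n + 1)⟫ +
          ⟪Q (zhat (n + 1)), z (n + 1) - y⟫) +
        (a (n + 1) * ⟪g' (x (n + 1)) + Q (zhat (n + 1)), zhat (n + 1) - z (n + 1)⟫ -
          ‖z (n + 1) - z n‖ ^ 2) =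
        a (n + 1) * (g (x (n + 1)) + ⟪g' (x (n + 1)), zhat (n + 1) - x (n + 1)⟫ +
          ⟪Q (zhat (n + 1)), zhat (n + 1) - y⟫) := by
      simp only [inner_add_left, inner_sub_right]
      ring
    have hQswap : ⟪Q (zhat (n + 1)), zhat (n + 1) - y⟫ = ⟪Q y, zhat (n + 1) - y⟫ := by
      have h1 := hanti (zhat (n + 1)) y
      simp only [inner_sub_right, hQ]
      linarith
    have hconv : A n * (g (x (n + 1)) + ⟪g' (x (n + 1)), x n - x (n + 1)⟫ +
        ⟪Q y, x n - y⟫) ≤ A n * (g (x n) + ⟪Q y, x n - y⟫) := by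
      have := hgconv (x (n + 1)) (x n)
      have h2 : g (x (n + 1)) + ⟪g' (x (n + 1)), x n - x (n + 1)⟫ + ⟪Q y, x n - y⟫ ≤
          g (x n) + ⟪Q y, x n - y⟫ := by linarith
      exact mul_le_mul_of_nonneg_left h2 hAn_nonneg
    have e1 : A n * ⟪g' (x (n + 1)), x n⟫ + a (n + 1) * ⟪g' (x (n + 1)), zhat (n + 1)⟫ =
        A (n + 1) * ⟪g' (x (n + 1)), x (n + 1)⟫ := by
      have h := congrArg (fun v => ⟪g' (x (n + 1)), v⟫) hkey
      simpa [inner_add_right, real_inner_smul_right] using h.symm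
    have e2 : A n * ⟪Q y, x n⟫ + a (n + 1) * ⟪Q y, zhat (n + 1)⟫ =
        A (n + 1) * ⟪Q y, x (n + 1)⟫ := by
      have h := congrArg (fun v => ⟪Q y, v⟫) hkey
      simpa [inner_add_right, real_inner_smul_right] using h.symm
    have hfinal : A n * (g (x (n + 1)) + ⟪g' (x (n + 1)), x n - x (n + 1)⟫ +
          ⟪Q y, x n - y⟫) +
        a (n + 1) * (g (x (n + 1)) + ⟪g' (x (n + 1)), zhat (n + 1) - x (n + 1)⟫ +
          ⟪Q y, zhat (n + 1) - y⟫) =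
        A (n + 1) * (g (x (n + 1)) + ⟪Q y, x (n + 1) - y⟫) := by
      simp only [inner_sub_right]
      linear_combination e1 + e2 +
        (g (x (n + 1)) - ⟪g' (x (n + 1)), x (n + 1)⟫ - ⟪Q y, y⟫) * hak
    have heq2 : a (n + 1) * (g (x (n + 1)) + ⟪g' (x (n + 1)), zhat (n + 1) - x (n + 1)⟫ +
          ⟪Q (zhat (n + 1)), zhat (n + 1) - y⟫) =
        a (n + 1) * (g (x (n + 1)) + ⟪g' (x (n + 1)), zhat (n + 1) - x (n + 1)⟫ +
          ⟪Q y, zhat (n + 1) - y⟫) := by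
      rw [hQswap]
    linarith [hψdiff, hψsplit, heq1, heq2, hconv, hfinal, ih, hgrad]
end

section
/- For every i ≥ 1, the error term satisfies E_i ≤ (1/2)((a_i² L / A_i)² − 1) ‖ẑ_i − z_{i−1}‖², where E_i = a_i ⟨∇g(x_i) + Q ẑ_i, ẑ_i − z_i⟩ − ‖z_i − z_{i−1}‖². -/
open scoped RealInnerProductSpace

/-- The error term satisfies
`E_i ≤ (1/2)((a_i² L / A_i)² − 1) ‖ẑ_i − z_{i−1}‖²`, where
`E_i = a_i ⟪∇g(x_i) + Q ẑ_i, ẑ_i − z_i⟫ − ‖z_i − z_{i−1}‖²`. -/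
theorem error_term_bound
    {E : Type*} [NormedAddCommGroup E] [InnerProductSpace ℝ E] [CompleteSpace E]
    (𝒳 : Set E) (hXconv : Convex ℝ 𝒳)
    (L : ℝ) (hL : 0 < L)
    (g : E → ℝ) (g' : E → E)
    (hgdiff : ∀ x : E, HasGradientAt g (g' x) x)
    (hgconv : ∀ x y : E, g x + ⟪g' x, y - x⟫ ≤ g y)
    (hgLip : ∀ x y : E, ‖g' x - g' y‖ ≤ L * ‖x - y‖)
    (Q : E →ₗ[ℝ] E) (hQ : ∀ u : E, ⟪Q u, u⟫ = 0)
    (i : ℕ) (hi : 1 ≤ i)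
    (ai Ai : ℝ) (hai : 0 < ai) (hAi : 0 < Ai)
    (xhatPrev : E)
    (zPrev zi : E) (hzPrev : zPrev ∈ 𝒳) (hzi : zi ∈ 𝒳)
    (zhati : E) (hzhati : zhati ∈ 𝒳)
    (hsub : ∀ z' ∈ 𝒳,
      ai * ⟪g' xhatPrev + Q zPrev +
          (Q (zhati - zPrev) + (2 / ai) • (zhati - zPrev)), zhati - z'⟫
        - (1 / 2) * (‖zhati - zPrev‖ ^ 2 + ‖zhati - z'‖ ^ 2) ≤ 0)
    (xi : E) (hxi : xi = xhatPrev + (ai / Ai) • (zhati - zPrev)) :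
    ai * ⟪g' xi + Q zhati, zhati - zi⟫ - ‖zi - zPrev‖ ^ 2
      ≤ (1 / 2) * ((ai ^ 2 * L / Ai) ^ 2 - 1) * ‖zhati - zPrev‖ ^ 2 := by
  set p := zhati - zPrev with hp
  set q := zhati - zi with hq
  have h1 := hsub zi hzi
  have hQz : Q zPrev + Q (zhati - zPrev) = Q zhati := by
    rw [map_sub]; abel
  have h1' : ai * (⟪g' xhatPrev, q⟫ + ⟪Q zhati, q⟫) + 2 * ⟪p, q⟫
      ≤ (1 / 2) * (‖p‖ ^ 2 + ‖q‖ ^ 2) := by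
    have e : g' xhatPrev + Q zPrev +
        (Q (zhati - zPrev) + (2 / ai) • (zhati - zPrev))
        = (g' xhatPrev + Q zhati) + (2 / ai) • p := by
      rw [← hQz]; simp [hp]; abel
    rw [e] at h1
    rw [inner_add_left, inner_add_left, real_inner_smul_left, ← hq] at h1
    have h2 : ai * (2 / ai * ⟪p, q⟫) = 2 * ⟪p, q⟫ := by
      field_simp
    rw [mul_add, h2] at h1
    linarith [h1]
  -- Lipschitz / Cauchy-Schwarz bound
  set c := ai ^ 2 * L / Ai with hc
  have hcnn : 0 ≤ c := by positivity
  have hxps : xi - xhatPrev = (ai / Ai) • p := by rw [hxi]; abel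
  have hlip : ‖g' xi - g' xhatPrev‖ ≤ (c / ai) * ‖p‖ := by
    calc ‖g' xi - g' xhatPrev‖ ≤ L * ‖xi - xhatPrev‖ := hgLip xi xhatPrev
      _ = L * ((ai / Ai) * ‖p‖) := by
          rw [hxps, norm_smul, Real.norm_eq_abs, abs_of_pos (by positivity)]
      _ = (c / ai) * ‖p‖ := by rw [hc]; field_simp
  have hcs : ai * ⟪g' xi - g' xhatPrev, q⟫ ≤ c * ‖p‖ * ‖q‖ := by
    have h2 := real_inner_le_norm (g' xi - g' xhatPrev) q
    have h3 : ⟪g' xi - g' xhatPrev, q⟫ ≤ (c / ai) * ‖p‖ * ‖q‖ := by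
      calc ⟪g' xi - g' xhatPrev, q⟫ ≤ ‖g' xi - g' xhatPrev‖ * ‖q‖ := h2
        _ ≤ (c / ai) * ‖p‖ * ‖q‖ := by
            have := norm_nonneg q
            nlinarith [hlip]
    have : ai * ⟪g' xi - g' xhatPrev, q⟫ ≤ ai * ((c / ai) * ‖p‖ * ‖q‖) := by
      exact mul_le_mul_of_nonneg_left h3 hai.le
    calc ai * ⟪g' xi - g' xhatPrev, q⟫ ≤ ai * ((c / ai) * ‖p‖ * ‖q‖) := this
      _ = c * ‖p‖ * ‖q‖ := by field_simp
  have hnorm : ‖zi - zPrev‖ ^ 2 = ‖p‖ ^ 2 - 2 * ⟪p, q⟫ + ‖q‖ ^ 2 := by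
    have : zi - zPrev = p - q := by rw [hp, hq]; abel
    rw [this, @norm_sub_sq_real]
  have hsplit : ⟪g' xi, q⟫ = ⟪g' xhatPrev, q⟫ + ⟪g' xi - g' xhatPrev, q⟫ := by
    rw [inner_sub_left]; ring
  rw [inner_add_left, hsplit, hnorm]
  nlinarith [sq_nonneg (c * ‖p‖ - ‖q‖), h1', hcs]
end

section
/- For each i ≥ 1, the per-iteration estimate holds: (A_i g(x_i) − ψ_i(z_i)) − (A_{i−1} g(x_{i−1}) − ψ_{i−1}(z_{i−1})) + a_i ⟨Q ẑ_i, ẑ_i − y⟩ ≤ a_i ⟨∇g(x_i) + Q ẑ_i, ẑ_i − z_i⟩ − ‖z_i − z_{i−1}‖², provided that z_{i−1} additionally satisfies ψ_{i−1}(z_i) ≥ ψ_{i−1}(z_{i−1}) + ‖z_i − z_{i−1}‖². -/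
open scoped RealInnerProductSpace

/-- For each `i ≥ 1`, the per-iteration estimate
`(A_i g(x_i) − ψ_i(z_i)) − (A_{i−1} g(x_{i−1}) − ψ_{i−1}(z_{i−1})) + a_i ⟪Q ẑ_i, ẑ_i − y⟫
  ≤ a_i ⟪∇g(x_i) + Q ẑ_i, ẑ_i − z_i⟫ − ‖z_i − z_{i−1}‖²`
holds, provided `ψ_{i−1}(z_i) ≥ ψ_{i−1}(z_{i−1}) + ‖z_i − z_{i−1}‖²`. -/
theorem per_iteration_estimate
    {E : Type*} [NormedAddCommGroup E] [InnerProductSpace ℝ E] [CompleteSpace E]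
    (𝒳 : Set E) (hXconv : Convex ℝ 𝒳)
    (L : ℝ) (hL : 0 < L)
    (g : E → ℝ) (g' : E → E)
    (hgdiff : ∀ x : E, HasGradientAt g (g' x) x)
    (hgconv : ∀ x y : E, g x + ⟪g' x, y - x⟫ ≤ g y)
    (hgLip : ∀ x y : E, ‖g' x - g' y‖ ≤ L * ‖x - y‖)
    (Q : E →ₗ[ℝ] E) (hQ : ∀ u : E, ⟪Q u, u⟫ = 0)
    (A a : ℕ → ℝ)
    (hA : ∀ k : ℕ, A k = (k : ℝ) ^ 2 / (4 * L))
    (ha : ∀ k : ℕ, 1 ≤ k → a k = A k - A (k - 1))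
    (x z zhat xhat : ℕ → E)
    (hx0z0 : x 0 = z 0)
    (hxX : ∀ i, x i ∈ 𝒳) (hzX : ∀ i, z i ∈ 𝒳)
    (hzhatX : ∀ i, zhat i ∈ 𝒳) (hxhatX : ∀ i, xhat i ∈ 𝒳)
    (hxhat : ∀ i : ℕ, 1 ≤ i →
      xhat (i - 1) = (A (i - 1) / A i) • x (i - 1) + (a i / A i) • z (i - 1))
    (hsub : ∀ i : ℕ, 1 ≤ i → ∀ z' ∈ 𝒳,
      a i * ⟪g' (xhat (i - 1)) + Q (z (i - 1)) +
          (Q (zhat i - z (i - 1)) + (2 / a i) • (zhat i - z (i - 1))), zhat i - z'⟫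
        - (1 / 2) * (‖zhat i - z (i - 1)‖ ^ 2 + ‖zhat i - z'‖ ^ 2) ≤ 0)
    (hxi : ∀ i : ℕ, 1 ≤ i →
      x i = xhat (i - 1) + (a i / A i) • (zhat i - z (i - 1)))
    (hopt : ∀ i : ℕ, 1 ≤ i → ∀ x' ∈ 𝒳,
      ⟪(∑ j ∈ Finset.Icc 1 i, a j • (g' (x j) + Q (zhat j))) + (2 : ℝ) • (z i - x 0),
        x' - z i⟫ ≥ 0)
    (y : E) (hy : y ∈ 𝒳)
    (ψ : ℕ → E → ℝ)
    (hψ : ∀ (k : ℕ) (w : E), ψ k w =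
      (∑ i ∈ Finset.Icc 1 k,
        a i * (g (x i) + ⟪g' (x i), w - x i⟫ + ⟪Q (zhat i), w - y⟫)) + ‖w - x 0‖ ^ 2)
    (i : ℕ) (hi : 1 ≤ i)
    (hstrongOpt : ψ (i - 1) (z i) ≥ ψ (i - 1) (z (i - 1)) + ‖z i - z (i - 1)‖ ^ 2) :
    (A i * g (x i) - ψ i (z i)) - (A (i - 1) * g (x (i - 1)) - ψ (i - 1) (z (i - 1)))
        + a i * ⟪Q (zhat i), zhat i - y⟫
      ≤ a i * ⟪g' (x i) + Q (zhat i), zhat i - z i⟫ - ‖z i - z (i - 1)‖ ^ 2 := by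
  obtain ⟨n, rfl⟩ : ∃ n, i = n + 1 := ⟨i - 1, (Nat.succ_pred_eq_of_pos hi).symm⟩
  simp only [Nat.add_sub_cancel] at hstrongOpt ⊢
  have hAn : 0 ≤ A n := by rw [hA]; positivity
  have hA1 : 0 < A (n + 1) := by
    rw [hA]
    have h1 : (0:ℝ) < ((n+1 : ℕ) : ℝ) := by exact_mod_cast Nat.succ_pos n
    positivity
  have ha1 : a (n + 1) = A (n + 1) - A n := by
    have h := ha (n + 1) (by omega); simpa using h
  have hxe : x (n + 1) = (A n / A (n+1)) • x n + (a (n+1) / A (n+1)) • zhat (n+1) := by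
    have h1 := hxi (n+1) (by omega)
    have h2 := hxhat (n+1) (by omega)
    simp only [Nat.add_sub_cancel] at h1 h2
    rw [h1, h2]; module
  have key : A n • (x (n+1) - x n) = a (n+1) • (zhat (n+1) - x (n+1)) := by
    rw [hxe, ha1]
    match_scalars <;> field_simp <;> ring
  have hinner := congrArg (fun v => ⟪g' (x (n+1)), v⟫) key
  simp only [real_inner_smul_right, inner_sub_right] at hinner
  have hc := hgconv (x (n+1)) (x n)
  have hc' : A n * (g (x (n+1)) + ⟪g' (x (n+1)), x n - x (n+1)⟫) ≤ A n * g (x n) :=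
    mul_le_mul_of_nonneg_left hc hAn
  simp only [inner_sub_right] at hc'
  have hψs : ψ (n+1) (z (n+1)) = ψ n (z (n+1)) +
      a (n+1) * (g (x (n+1)) + ⟪g' (x (n+1)), z (n+1) - x (n+1)⟫
        + ⟪Q (zhat (n+1)), z (n+1) - y⟫) := by
    rw [hψ, hψ, Finset.sum_Icc_succ_top (by omega : 1 ≤ n+1)]
    ring
  rw [hψs]
  simp only [inner_add_left, inner_sub_right] at *
  rw [ha1] at *
  nlinarith [hinner, hc', hstrongOpt]
end

section
/- Suppose ṽ ∈ 𝒱 satisfies, for all v ∈ 𝒱, ⟨∇l(ṽ), ṽ − v⟩ ≤ (2/c²)‖ṽ − v¹‖·‖ṽ − v‖, and set w̃ = w¹ − (c/2)(w⁰ + A(ṽ − v¹)). Then, for all w ∈ ℝ^d and all v ∈ 𝒱, c⟨w⁰ + A(ṽ − v¹) + (2/c)(w̃ − w¹), w̃ − w⟩ + c⟨v⁰ − Aᵀ(w̃ − w¹) + (2/c)(ṽ − v¹), ṽ − v⟩ − (1/2)(‖w̃ − w¹‖² + ‖ṽ − v¹‖² + ‖w̃ − w‖² + ‖ṽ − v‖²)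 ≤ 0; that is, the pair (w̃, ṽ) solves the BAXG subproblem condition. -/
open scoped RealInnerProductSpace
open Matrix

/-- If `ṽ ∈ 𝒱` satisfies `⟪∇l(ṽ), ṽ − v⟫ ≤ (2/c²)‖ṽ − v¹‖·‖ṽ − v‖` for all
`v ∈ 𝒱`, and `w̃ = w¹ − (c/2)(w⁰ + A(ṽ − v¹))`, then for all `w ∈ ℝ^d` and all `v ∈ 𝒱`,
`c⟪w⁰ + A(ṽ − v¹) + (2/c)(w̃ − w¹), w̃ − w⟫ + c⟪v⁰ − Aᵀ(w̃ − w¹) + (2/c)(ṽ − v¹), ṽ − v⟫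
  − (1/2)(‖w̃ − w¹‖² + ‖ṽ − v¹‖² + ‖w̃ − w‖² + ‖ṽ − v‖²) ≤ 0`,
i.e. the pair `(w̃, ṽ)` solves the BAXG subproblem condition. -/
theorem subproblem_reduction
    (d n : ℕ) (hd : 1 ≤ d) (hn : 1 ≤ n)
    (A : Matrix (Fin d) (Fin n) ℝ)
    (𝒱 : Set (EuclideanSpace ℝ (Fin n))) (hV : Convex ℝ 𝒱)
    (c : ℝ) (hc : 0 < c)
    (w0 w1 : EuclideanSpace ℝ (Fin d)) (v0 v1 : EuclideanSpace ℝ (Fin n))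
    (gradl : EuclideanSpace ℝ (Fin n) → EuclideanSpace ℝ (Fin n))
    (hgradl : ∀ v : EuclideanSpace ℝ (Fin n),
      gradl v = Matrix.toEuclideanLin (Aᵀ * A) (v - v1) + (4 / c ^ 2) • (v - v1)
        + (2 / c) • v0 + Matrix.toEuclideanLin Aᵀ w0)
    (vt : EuclideanSpace ℝ (Fin n)) (hvt : vt ∈ 𝒱)
    (hvtApprox : ∀ v ∈ 𝒱, ⟪gradl vt, vt - v⟫ ≤ (2 / c ^ 2) * ‖vt - v1‖ * ‖vt - v‖)
    (wt : EuclideanSpace ℝ (Fin d))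
    (hwt : wt = w1 - (c / 2) • (w0 + Matrix.toEuclideanLin A (vt - v1))) :
    ∀ (w : EuclideanSpace ℝ (Fin d)), ∀ v ∈ 𝒱,
      c * ⟪w0 + Matrix.toEuclideanLin A (vt - v1) + (2 / c) • (wt - w1), wt - w⟫
        + c * ⟪v0 - Matrix.toEuclideanLin Aᵀ (wt - w1) + (2 / c) • (vt - v1), vt - v⟫
        - (1 / 2) * (‖wt - w1‖ ^ 2 + ‖vt - v1‖ ^ 2 + ‖wt - w‖ ^ 2 + ‖vt - v‖ ^ 2) ≤ 0 := by
  intro w v hv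
  have hc2 : c ≠ 0 := ne_of_gt hc
  have hwt1 : wt - w1 = -((c / 2) • (w0 + Matrix.toEuclideanLin A (vt - v1))) := by
    rw [hwt]; abel
  have h1 : w0 + Matrix.toEuclideanLin A (vt - v1) + (2 / c) • (wt - w1) = 0 := by
    rw [hwt1, smul_neg, smul_smul]
    have : (2 / c) * (c / 2) = 1 := by field_simp
    rw [this, one_smul]; abel
  have hmul : Matrix.toEuclideanLin (Aᵀ * A) (vt - v1)
      = Matrix.toEuclideanLin Aᵀ (Matrix.toEuclideanLin A (vt - v1)) := by
    simp [Matrix.toEuclideanLin_eq_toLin,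
      Matrix.toLin_mul (PiLp.basisFun 2 ℝ (Fin n)) (PiLp.basisFun 2 ℝ (Fin d))
        (PiLp.basisFun 2 ℝ (Fin n))]
  have h2 : c • (v0 - Matrix.toEuclideanLin Aᵀ (wt - w1) + (2 / c) • (vt - v1))
      = (c ^ 2 / 2) • gradl vt := by
    rw [hgradl, hwt1, map_neg, LinearMap.map_smul, map_add, hmul]
    match_scalars <;> field_simp <;> ring
  have key : c * ⟪v0 - Matrix.toEuclideanLin Aᵀ (wt - w1) + (2 / c) • (vt - v1), vt - v⟫
      ≤ ‖vt - v1‖ * ‖vt - v‖ := by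
    have := hvtApprox v hv
    have h3 : c * ⟪v0 - Matrix.toEuclideanLin Aᵀ (wt - w1) + (2 / c) • (vt - v1), vt - v⟫
        = (c ^ 2 / 2) * ⟪gradl vt, vt - v⟫ := by
      rw [← real_inner_smul_left, h2, real_inner_smul_left]
    rw [h3]
    have hcc : 0 < c ^ 2 / 2 := by positivity
    calc (c ^ 2 / 2) * ⟪gradl vt, vt - v⟫
        ≤ (c ^ 2 / 2) * ((2 / c ^ 2) * ‖vt - v1‖ * ‖vt - v‖) := by
          exact mul_le_mul_of_nonneg_left this (le_of_lt hcc)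
      _ = ‖vt - v1‖ * ‖vt - v‖ := by field_simp
  rw [h1, inner_zero_left, mul_zero]
  have hn1 : 0 ≤ ‖wt - w1‖ ^ 2 := sq_nonneg _
  have hn2 : 0 ≤ ‖wt - w‖ ^ 2 := sq_nonneg _
  nlinarith [sq_nonneg (‖vt - v1‖ - ‖vt - v‖)]
end

section
/- For every t ≥ 0, the estimate function evaluated at its minimizer satisfies φ_t(u_t) ≤ B_t l(v*) + (1/2)‖v* − v_0‖². -/
open scoped RealInnerProductSpace

/-- For every `t ≥ 0`, the estimate function evaluated at its minimizer
satisfies `φ_t(u_t) ≤ B_t l(v*) + (1/2)‖v* − v₀‖²`. -/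
theorem pagd_estimate_upper_bound
    {V : Type*} [NormedAddCommGroup V] [InnerProductSpace ℝ V] [CompleteSpace V]
    (𝒱 : Set V) (hVconv : Convex ℝ 𝒱)
    (σl Ll : ℝ) (hσ : 0 < σl) (hσL : σl ≤ Ll)
    (l : V → ℝ) (l' : V → V)
    (hldiff : ∀ x : V, HasGradientAt l (l' x) x)
    (hlstrong : ∀ x y : V, l x + ⟪l' x, y - x⟫ + (σl / 2) * ‖y - x‖ ^ 2 ≤ l y)
    (hlLip : ∀ x y : V, ‖l' x - l' y‖ ≤ Ll * ‖x - y‖)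
    (B b : ℕ → ℝ)
    (hB0 : B 0 = 0)
    (hB : ∀ t : ℕ, 1 ≤ t →
      B t = (1 / (2 * Ll)) * (1 + Real.sqrt (σl / (2 * Ll))) ^ (t - 1))
    (hb : ∀ t : ℕ, 1 ≤ t → b t = B t - B (t - 1))
    (v u vhat : ℕ → V)
    (hv0u0 : v 0 = u 0)
    (hvX : ∀ t, v t ∈ 𝒱) (huX : ∀ t, u t ∈ 𝒱) (hvhatX : ∀ t, vhat t ∈ 𝒱)
    (hvhat : ∀ t : ℕ, 1 ≤ t →
      vhat (t - 1) = (B (t - 1) / B t) • v (t - 1) + (b t / B t) • u (t - 1))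
    (hvmin : ∀ t : ℕ, 1 ≤ t → ∀ w ∈ 𝒱,
      ⟪l' (vhat (t - 1)), v t⟫ + Ll * ‖v t - vhat (t - 1)‖ ^ 2
        ≤ ⟪l' (vhat (t - 1)), w⟫ + Ll * ‖w - vhat (t - 1)‖ ^ 2)
    (φ : ℕ → V → ℝ)
    (hφ : ∀ (t : ℕ) (w : V), φ t w =
      (∑ i ∈ Finset.Icc 1 t,
        b i * (l (vhat (i - 1)) + ⟪l' (vhat (i - 1)), w - vhat (i - 1)⟫
          + (σl / 2) * ‖w - vhat (i - 1)‖ ^ 2)) + (1 / 2) * ‖w - v 0‖ ^ 2)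
    (humin : ∀ (t : ℕ), ∀ w ∈ 𝒱, φ t (u t) ≤ φ t w)
    (vst : V) (hvstX : vst ∈ 𝒱) (hvstmin : ∀ w ∈ 𝒱, l vst ≤ l w)
    (t : ℕ) :
    φ t (u t) ≤ B t * l vst + (1 / 2) * ‖vst - v 0‖ ^ 2 := by
  have hLl : 0 < Ll := lt_of_lt_of_le hσ hσL
  have hr : (1:ℝ) ≤ 1 + Real.sqrt (σl / (2 * Ll)) := by
    have := Real.sqrt_nonneg (σl / (2 * Ll)); linarith
  have hc : 0 ≤ 1 / (2 * Ll) := by positivity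
  -- b i ≥ 0 for i ≥ 1
  have hbnn : ∀ i : ℕ, 1 ≤ i → 0 ≤ b i := by
    intro i hi
    rw [hb i hi]
    rcases Nat.eq_or_lt_of_le hi with h1 | h2
    · rw [← h1]; simp [hB0]
      rw [hB 1 le_rfl]; positivity
    · have hi2 : 2 ≤ i := h2
      have hi1 : 1 ≤ i - 1 := by omega
      rw [hB i hi, hB (i-1) hi1]
      have : i - 1 - 1 ≤ i - 1 := by omega
      have hpow := pow_le_pow_right₀ hr this
      nlinarith [pow_nonneg (le_trans zero_le_one hr) (i - 1 - 1)]
  -- sum of b equals B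
  have hsum : ∀ s : ℕ, ∑ i ∈ Finset.Icc 1 s, b i = B s := by
    intro s
    induction s with
    | zero => simp [hB0]
    | succ n ih =>
      rw [Finset.sum_Icc_succ_top (by omega : 1 ≤ n + 1), ih, hb (n+1) (by omega)]
      simp
  calc φ t (u t) ≤ φ t vst := humin t vst hvstX
    _ ≤ B t * l vst + (1 / 2) * ‖vst - v 0‖ ^ 2 := by
        rw [hφ, ← hsum t, Finset.sum_mul]
        refine add_le_add ?_ le_rfl
        exact Finset.sum_le_sum fun i hi => mul_le_mul_of_nonneg_left
          (hlstrong (vhat (i-1)) vst) (hbnn i (Finset.mem_Icc.mp hi).1)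
end

section
/- For every t ≥ 0, one has B_t l(v_t) + Σ_{i=1}^t (L_l B_i / 2) ‖v_i − v̂_{i−1}‖² ≤ φ_t(u_t). -/
open scoped RealInnerProductSpace

lemma pagd_aux_descent {V : Type*} [NormedAddCommGroup V] [InnerProductSpace ℝ V] [CompleteSpace V]
    (Ll : ℝ) (l : V → ℝ) (l' : V → V)
    (hldiff : ∀ x : V, HasGradientAt l (l' x) x)
    (hlLip : ∀ x y : V, ‖l' x - l' y‖ ≤ Ll * ‖x - y‖)
    (x y : V) : l y ≤ l x + ⟪l' x, y - x⟫ + Ll / 2 * ‖y - x‖ ^ 2 := by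
  set d := y - x with hd
  have hq : ∀ s : ℝ, HasDerivAt (fun s : ℝ => l (x + s • d)) ⟪l' (x + s • d), d⟫ s := by
    intro s
    have h1 : HasDerivAt (fun s : ℝ => x + s • d) d s := by
      simpa using ((hasDerivAt_id s).smul_const d).const_add x
    have h2 := (hldiff (x + s • d)).hasFDerivAt
    have := h2.comp_hasDerivAt s h1
    simp at this
    exact this
  set r : ℝ → ℝ := fun s => l x + s * ⟪l' x, d⟫ + Ll / 2 * s ^ 2 * ‖d‖ ^ 2 - l (x + s • d) with hrdef
  have hr : ∀ s : ℝ, HasDerivAt r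
      (⟪l' x, d⟫ + Ll / 2 * (2 * s) * ‖d‖ ^ 2 - ⟪l' (x + s • d), d⟫) s := by
    intro s
    have ha : HasDerivAt (fun s : ℝ => l x + s * ⟪l' x, d⟫ + Ll / 2 * s ^ 2 * ‖d‖ ^ 2)
        (⟪l' x, d⟫ + Ll / 2 * (2 * s) * ‖d‖ ^ 2) s := by
      have h1 : HasDerivAt (fun s : ℝ => s * ⟪l' x, d⟫) ⟪l' x, d⟫ s := by
        simpa using (hasDerivAt_id s).mul_const ⟪l' x, d⟫
      have h2 : HasDerivAt (fun s : ℝ => Ll / 2 * s ^ 2 * ‖d‖ ^ 2)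
          (Ll / 2 * (2 * s) * ‖d‖ ^ 2) s := by
        have := ((hasDerivAt_pow 2 s).const_mul (Ll / 2)).mul_const (‖d‖ ^ 2)
        simpa [mul_comm, mul_assoc, mul_left_comm] using this
      exact ((h1.const_add (l x)).add h2)
    exact ha.sub (hq s)
  have hmono : MonotoneOn r (Set.Icc (0:ℝ) 1) := by
    apply monotoneOn_of_deriv_nonneg (convex_Icc (0:ℝ) 1)
    · exact fun s _ => (hr s).continuousAt.continuousWithinAt
    · intro s _
      exact ((hr s).differentiableAt).differentiableWithinAt
    · intro s hs
      rw [interior_Icc] at hs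
      rw [(hr s).deriv]
      have hineq : ⟪l' (x + s • d), d⟫ - ⟪l' x, d⟫ ≤ Ll * s * ‖d‖ ^ 2 := by
        have h1 : ⟪l' (x + s • d) - l' x, d⟫ ≤ ‖l' (x + s • d) - l' x‖ * ‖d‖ :=
          real_inner_le_norm _ _
        have h2 : ‖l' (x + s • d) - l' x‖ ≤ Ll * (s * ‖d‖) := by
          have := hlLip (x + s • d) x
          simpa [norm_smul, abs_of_nonneg hs.1.le, mul_assoc] using this
        have h3 : ‖l' (x + s • d) - l' x‖ * ‖d‖ ≤ Ll * (s * ‖d‖) * ‖d‖ :=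
          mul_le_mul_of_nonneg_right h2 (norm_nonneg d)
        have h4 : ⟪l' (x + s • d) - l' x, d⟫ = ⟪l' (x + s • d), d⟫ - ⟪l' x, d⟫ :=
          inner_sub_left _ _ _
        nlinarith [h1, h3]
      nlinarith [hineq]
  have h01 : r 0 ≤ r 1 := hmono (by simp) (by simp) zero_le_one
  have hr0 : r 0 = 0 := by simp [hrdef]
  have hr1 : r 1 = l x + ⟪l' x, d⟫ + Ll / 2 * ‖d‖ ^ 2 - l y := by
    simp [hrdef, hd]
  rw [hr0, hr1] at h01
  linarith

lemma pagd_aux_comb {V : Type*} [NormedAddCommGroup V] [InnerProductSpace ℝ V]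
    (a w c : V) (lam : ℝ) :
    ‖(a + lam • (w - a)) - c‖ ^ 2
      = ‖a - c‖ ^ 2 + lam * (‖w - c‖ ^ 2 - ‖a - c‖ ^ 2) - lam * (1 - lam) * ‖w - a‖ ^ 2 := by
  have he : (a + lam • (w - a)) - c = (a - c) + lam • (w - a) := by abel
  have h3 : ‖lam • (w - a)‖ ^ 2 = lam ^ 2 * ‖w - a‖ ^ 2 := by
    rw [norm_smul]; simp [mul_pow, sq_abs]
  have h4 : w - c = (a - c) + (w - a) := by abel
  calc ‖(a + lam • (w - a)) - c‖ ^ 2 = ‖(a - c) + lam • (w - a)‖ ^ 2 := by rw [he]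
    _ = ‖a - c‖ ^ 2 + 2 * (lam * ⟪a - c, w - a⟫) + lam ^ 2 * ‖w - a‖ ^ 2 := by
        rw [norm_add_sq_real, real_inner_smul_right, h3]
    _ = ‖a - c‖ ^ 2 + lam * (‖w - c‖ ^ 2 - ‖a - c‖ ^ 2) - lam * (1 - lam) * ‖w - a‖ ^ 2 := by
        rw [h4, norm_add_sq_real]; ring

lemma pagd_aux_strong_min {V : Type*} [NormedAddCommGroup V] [InnerProductSpace ℝ V]
    {𝒱 : Set V} (hconv : Convex ℝ 𝒱) (f : V → ℝ) (μ : ℝ) (hμ : 0 ≤ μ)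
    (hquad : ∀ (a w : V) (lam : ℝ),
      f (a + lam • (w - a)) = f a + lam * (f w - f a) - μ / 2 * lam * (1 - lam) * ‖w - a‖ ^ 2)
    (u : V) (hu : u ∈ 𝒱) (hmin : ∀ w ∈ 𝒱, f u ≤ f w) (w : V) (hw : w ∈ 𝒱) :
    f u + μ / 2 * ‖w - u‖ ^ 2 ≤ f w := by
  by_contra hcon
  push_neg at hcon
  set K : ℝ := μ / 2 * ‖w - u‖ ^ 2 with hK
  have hKnn : 0 ≤ K := by positivity
  set c : ℝ := f w - f u - K with hc
  have hcneg : c < 0 := by rw [hc]; linarith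
  have hpos : (0:ℝ) < 2 * (K + 1) := by linarith
  set lam : ℝ := min 1 ((-c) / (2 * (K + 1))) with hlam
  have hlampos : 0 < lam := lt_min one_pos (div_pos (neg_pos.mpr hcneg) hpos)
  have hlamle : lam ≤ 1 := min_le_left _ _
  have hmem : u + lam • (w - u) ∈ 𝒱 := by
    have he : u + lam • (w - u) = (1 - lam) • u + lam • w := by
      rw [smul_sub, sub_smul, one_smul]; abel
    rw [he]
    exact hconv hu hw (by linarith) hlampos.le (by ring)
  have hge := hmin _ hmem
  rw [hquad u w lam] at hge
  have hthis : lam * (f w - f u) - μ / 2 * lam * (1 - lam) * ‖w - u‖ ^ 2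
      = lam * c + K * lam ^ 2 := by rw [hc, hK]; ring
  have h1 : lam ≤ (-c) / (2 * (K + 1)) := min_le_right _ _
  have h1' : lam * (2 * (K + 1)) ≤ -c := (le_div_iff₀ hpos).mp h1
  clear_value lam c K
  have h0 : 0 ≤ lam * c + K * lam ^ 2 := by linarith [hge, hthis]
  nlinarith [h0, h1', hlampos, hKnn, hcneg, mul_le_mul_of_nonneg_left h1' hlampos.le,
    mul_pos hlampos hlampos, sq_nonneg lam]

set_option maxHeartbeats 1000000 in
/-- For every `t ≥ 0`,
`B_t l(v_t) + Σ_{i=1}^t (L_l B_i / 2) ‖v_i − v̂_{i−1}‖² ≤ φ_t(u_t)`. -/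
theorem pagd_estimate_lower_bound
    {V : Type*} [NormedAddCommGroup V] [InnerProductSpace ℝ V] [CompleteSpace V]
    (𝒱 : Set V) (hVconv : Convex ℝ 𝒱)
    (σl Ll : ℝ) (hσ : 0 < σl) (hσL : σl ≤ Ll)
    (l : V → ℝ) (l' : V → V)
    (hldiff : ∀ x : V, HasGradientAt l (l' x) x)
    (hlstrong : ∀ x y : V, l x + ⟪l' x, y - x⟫ + (σl / 2) * ‖y - x‖ ^ 2 ≤ l y)
    (hlLip : ∀ x y : V, ‖l' x - l' y‖ ≤ Ll * ‖x - y‖)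
    (B b : ℕ → ℝ)
    (hB0 : B 0 = 0)
    (hB : ∀ t : ℕ, 1 ≤ t →
      B t = (1 / (2 * Ll)) * (1 + Real.sqrt (σl / (2 * Ll))) ^ (t - 1))
    (hb : ∀ t : ℕ, 1 ≤ t → b t = B t - B (t - 1))
    (v u vhat : ℕ → V)
    (hv0u0 : v 0 = u 0)
    (hvX : ∀ t, v t ∈ 𝒱) (huX : ∀ t, u t ∈ 𝒱) (hvhatX : ∀ t, vhat t ∈ 𝒱)
    (hvhat : ∀ t : ℕ, 1 ≤ t →
      vhat (t - 1) = (B (t - 1) / B t) • v (t - 1) + (b t / B t) • u (t - 1))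
    (hvmin : ∀ t : ℕ, 1 ≤ t → ∀ w ∈ 𝒱,
      ⟪l' (vhat (t - 1)), v t⟫ + Ll * ‖v t - vhat (t - 1)‖ ^ 2
        ≤ ⟪l' (vhat (t - 1)), w⟫ + Ll * ‖w - vhat (t - 1)‖ ^ 2)
    (φ : ℕ → V → ℝ)
    (hφ : ∀ (t : ℕ) (w : V), φ t w =
      (∑ i ∈ Finset.Icc 1 t,
        b i * (l (vhat (i - 1)) + ⟪l' (vhat (i - 1)), w - vhat (i - 1)⟫
          + (σl / 2) * ‖w - vhat (i - 1)‖ ^ 2)) + (1 / 2) * ‖w - v 0‖ ^ 2)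
    (humin : ∀ (t : ℕ), ∀ w ∈ 𝒱, φ t (u t) ≤ φ t w)
    (t : ℕ) :
    B t * l (v t) + ∑ i ∈ Finset.Icc 1 t, (Ll * B i / 2) * ‖v i - vhat (i - 1)‖ ^ 2
      ≤ φ t (u t) := by
  have hL : 0 < Ll := lt_of_lt_of_le hσ hσL
  set rr : ℝ := 1 + Real.sqrt (σl / (2 * Ll)) with hrrdef
  have hrr1 : 1 ≤ rr := by
    have := Real.sqrt_nonneg (σl / (2 * Ll)); rw [hrrdef]; linarith
  have hc1 : (0:ℝ) < 1 / (2 * Ll) := by positivity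
  have hBt : ∀ s : ℕ, B (s + 1) = (1 / (2 * Ll)) * rr ^ s := by
    intro s
    have := hB (s + 1) (by omega)
    simpa using this
  have hBpos : ∀ s : ℕ, 0 < B (s + 1) := by
    intro s; rw [hBt s]
    have : (0:ℝ) < rr := by linarith
    positivity
  have hBnn : ∀ s : ℕ, 0 ≤ B s := by
    intro s
    cases s with
    | zero => rw [hB0]
    | succ n => exact (hBpos n).le
  have hbval : ∀ s : ℕ, b (s + 1) = B (s + 1) - B s := by
    intro s
    have := hb (s + 1) (by omega)
    simpa using this
  have hbnn : ∀ s : ℕ, 0 ≤ b (s + 1) := by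
    intro s
    rw [hbval]
    cases s with
    | zero => rw [hB0]; simpa using (hBpos 0).le
    | succ n =>
      rw [hBt (n + 1), hBt n]
      have h1 : rr ^ n ≤ rr ^ (n + 1) := pow_le_pow_right₀ hrr1 (Nat.le_succ n)
      nlinarith [hc1]
  have hsumb : ∀ s : ℕ, ∑ i ∈ Finset.Icc 1 s, b i = B s := by
    intro s
    induction s with
    | zero => simp [Finset.Icc_eq_empty (by omega : ¬ (1:ℕ) ≤ 0), hB0]
    | succ n ihn =>
      rw [Finset.sum_Icc_succ_top (by omega : 1 ≤ n + 1), ihn, hbval n]; ring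
  have hsqrr : rr - 1 = Real.sqrt (σl / (2 * Ll)) := by rw [hrrdef]; ring
  have e2' : 2 * Ll * (rr - 1) ^ 2 = σl := by
    rw [hsqrr, Real.sq_sqrt (by positivity : (0:ℝ) ≤ σl / (2 * Ll))]
    field_simp
  have hcoef : ∀ s : ℕ, 2 * Ll * (b (s + 1)) ^ 2 ≤ B (s + 1) * (σl * B s + 1) := by
    intro s
    cases s with
    | zero =>
      rw [hbval 0, hB0, hBt 0]
      simp only [pow_zero, mul_one, sub_zero, mul_zero, zero_add]
      rw [div_pow, one_pow]
      rw [show 2 * Ll * (1 / (2 * Ll) ^ 2) = 1 / (2 * Ll) by field_simp]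
    | succ n =>
      have e1 : b (n + 1 + 1) = (1 / (2 * Ll)) * rr ^ n * (rr - 1) := by
        rw [hbval (n + 1), hBt (n + 1), hBt n]; ring
      have hRpos : 0 < rr ^ n := pow_pos (by linarith) n
      rw [e1, hBt (n + 1), hBt n]
      have e3 : 2 * Ll * ((1 / (2 * Ll)) * rr ^ n * (rr - 1)) ^ 2
          = σl * ((1 / (2 * Ll)) * rr ^ n) ^ 2 := by
        have h : 2 * Ll * ((1 / (2 * Ll)) * rr ^ n * (rr - 1)) ^ 2
            = (2 * Ll * (rr - 1) ^ 2) * ((1 / (2 * Ll)) * rr ^ n) ^ 2 := by ring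
        rw [h, e2']
      have hps : rr ^ (n + 1) = rr ^ n * rr := pow_succ rr n
      rw [e3, hps]
      have k1 : 0 ≤ (rr - 1) * (σl * (1 / (2 * Ll) * rr ^ n) ^ 2) :=
        mul_nonneg (by linarith) (by positivity)
      have k2 : 0 < 1 / (2 * Ll) * rr ^ n * rr :=
        mul_pos (mul_pos hc1 hRpos) (by linarith : (0:ℝ) < rr)
      nlinarith [k1, k2]
  have hquad : ∀ (s : ℕ) (a w : V) (lam : ℝ),
      φ s (a + lam • (w - a)) = φ s a + lam * (φ s w - φ s a)
        - (σl * B s + 1) / 2 * lam * (1 - lam) * ‖w - a‖ ^ 2 := by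
    intro s a w lam
    rw [hφ s (a + lam • (w - a)), hφ s a, hφ s w]
    have hterm : ∀ i ∈ Finset.Icc 1 s,
        b i * (l (vhat (i - 1)) + ⟪l' (vhat (i - 1)), (a + lam • (w - a)) - vhat (i - 1)⟫
            + (σl / 2) * ‖(a + lam • (w - a)) - vhat (i - 1)‖ ^ 2)
        = (b i * (l (vhat (i - 1)) + ⟪l' (vhat (i - 1)), a - vhat (i - 1)⟫
            + (σl / 2) * ‖a - vhat (i - 1)‖ ^ 2))
          + lam * ((b i * (l (vhat (i - 1)) + ⟪l' (vhat (i - 1)), w - vhat (i - 1)⟫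
            + (σl / 2) * ‖w - vhat (i - 1)‖ ^ 2))
            - (b i * (l (vhat (i - 1)) + ⟪l' (vhat (i - 1)), a - vhat (i - 1)⟫
            + (σl / 2) * ‖a - vhat (i - 1)‖ ^ 2)))
          - b i * ((σl / 2) * (lam * (1 - lam) * ‖w - a‖ ^ 2)) := by
      intro i _
      have hi : (a + lam • (w - a)) - vhat (i - 1) = (a - vhat (i - 1)) + lam • (w - a) := by
        abel
      have hwa : w - a = (w - vhat (i - 1)) - (a - vhat (i - 1)) := by abel
      have hinner : ⟪l' (vhat (i - 1)), (a + lam • (w - a)) - vhat (i - 1)⟫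
          = ⟪l' (vhat (i - 1)), a - vhat (i - 1)⟫
            + lam * (⟪l' (vhat (i - 1)), w - vhat (i - 1)⟫
              - ⟪l' (vhat (i - 1)), a - vhat (i - 1)⟫) := by
        rw [hi, inner_add_right, real_inner_smul_right, hwa]
        simp only [inner_sub_right]
      rw [hinner, pagd_aux_comb a w (vhat (i - 1)) lam]
      ring
    rw [Finset.sum_congr rfl hterm, Finset.sum_sub_distrib, Finset.sum_add_distrib,
      ← Finset.mul_sum, Finset.sum_sub_distrib, ← Finset.sum_mul, hsumb s,
      pagd_aux_comb a w (v 0) lam]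
    ring
  have hstrong : ∀ (s : ℕ) (w : V), w ∈ 𝒱 →
      φ s (u s) + (σl * B s + 1) / 2 * ‖w - u s‖ ^ 2 ≤ φ s w := by
    intro s w hw
    exact pagd_aux_strong_min hVconv (φ s) (σl * B s + 1)
      (by nlinarith [hBnn s, hσ]) (hquad s) (u s) (huX s) (humin s) w hw
  induction t with
  | zero =>
    rw [hφ 0 (u 0), hB0]
    rw [Finset.Icc_eq_empty (by omega : ¬ (1:ℕ) ≤ 0)]
    simp only [Finset.sum_empty, zero_mul, zero_add, add_zero]
    positivity
  | succ n ih =>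
    have hn1 : (1:ℕ) ≤ n + 1 := by omega
    have hB' : 0 < B (n + 1) := hBpos n
    have hbB : b (n + 1) = B (n + 1) - B n := hbval n
    have hbnn' : 0 ≤ b (n + 1) := hbnn n
    have hvh : vhat n = (B n / B (n + 1)) • v n + (b (n + 1) / B (n + 1)) • u n :=
      hvhat (n + 1) hn1
    have hBvh : B (n + 1) • vhat n = B n • v n + b (n + 1) • u n := by
      rw [hvh, smul_add, smul_smul, smul_smul,
        show B (n + 1) * (B n / B (n + 1)) = B n by field_simp,
        show B (n + 1) * (b (n + 1) / B (n + 1)) = b (n + 1) by field_simp]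
    set w0 : V := vhat n + (b (n + 1) / B (n + 1)) • (u (n + 1) - u n) with hw0
    have hw0mem : w0 ∈ 𝒱 := by
      have he : w0 = (B n / B (n + 1)) • v n + (b (n + 1) / B (n + 1)) • u (n + 1) := by
        rw [hw0, hvh, smul_sub]; abel
      rw [he]
      refine hVconv (hvX n) (huX (n + 1)) (div_nonneg (hBnn n) hB'.le)
        (div_nonneg hbnn' hB'.le) ?_
      rw [← add_div, hbB, show B n + (B (n + 1) - B n) = B (n + 1) by ring]
      exact div_self hB'.ne'
    have hdes := pagd_aux_descent Ll l l' hldiff hlLip (vhat n) (v (n + 1))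
    have hvm : ⟪l' (vhat n), v (n + 1)⟫ + Ll * ‖v (n + 1) - vhat n‖ ^ 2
        ≤ ⟪l' (vhat n), w0⟫ + Ll * ‖w0 - vhat n‖ ^ 2 := hvmin (n + 1) hn1 w0 hw0mem
    have hw0sub : w0 - vhat n = (b (n + 1) / B (n + 1)) • (u (n + 1) - u n) := by
      rw [hw0]; abel
    have hw0norm : ‖w0 - vhat n‖ ^ 2
        = (b (n + 1) / B (n + 1)) ^ 2 * ‖u (n + 1) - u n‖ ^ 2 := by
      rw [hw0sub, norm_smul, Real.norm_eq_abs, mul_pow, sq_abs]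
    have hw0in : ⟪l' (vhat n), w0⟫
        = ⟪l' (vhat n), vhat n⟫ + (b (n + 1) / B (n + 1)) * ⟪l' (vhat n), u (n + 1) - u n⟫ := by
      rw [hw0, inner_add_right, real_inner_smul_right]
    have hsc : l (vhat n) + ⟪l' (vhat n), v n - vhat n⟫ ≤ l (v n) := by
      have h1 := hlstrong (vhat n) (v n)
      have h2 : 0 ≤ σl / 2 * ‖v n - vhat n‖ ^ 2 := by positivity
      linarith
    have hsplit : φ (n + 1) (u (n + 1)) = φ n (u (n + 1))
        + b (n + 1) * (l (vhat n) + ⟪l' (vhat n), u (n + 1) - vhat n⟫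
          + (σl / 2) * ‖u (n + 1) - vhat n‖ ^ 2) := by
      rw [hφ (n + 1) (u (n + 1)), hφ n (u (n + 1)), Finset.sum_Icc_succ_top hn1]
      simp only [Nat.add_sub_cancel]
      ring
    have hsm := hstrong n (u (n + 1)) (huX (n + 1))
    have hvec : B n • (v n - vhat n) + b (n + 1) • (u (n + 1) - vhat n)
        = b (n + 1) • (u (n + 1) - u n) := by
      have h1 : B n • (v n - vhat n) + b (n + 1) • (u (n + 1) - vhat n)
          = (B n • v n + b (n + 1) • u n) + b (n + 1) • (u (n + 1) - u n)
            - (B n + b (n + 1)) • vhat n := by module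
      rw [h1, ← hBvh, hbB, show B n + (B (n + 1) - B n) = B (n + 1) by ring]
      abel
    have hinid : B n * ⟪l' (vhat n), v n - vhat n⟫
          + b (n + 1) * ⟪l' (vhat n), u (n + 1) - vhat n⟫
        = b (n + 1) * ⟪l' (vhat n), u (n + 1) - u n⟫ := by
      have h := congrArg (fun z : V => ⟪l' (vhat n), z⟫) hvec
      simpa [inner_add_right, real_inner_smul_right] using h
    have hSsplit : ∑ i ∈ Finset.Icc 1 (n + 1), (Ll * B i / 2) * ‖v i - vhat (i - 1)‖ ^ 2
        = (∑ i ∈ Finset.Icc 1 n, (Ll * B i / 2) * ‖v i - vhat (i - 1)‖ ^ 2)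
          + (Ll * B (n + 1) / 2) * ‖v (n + 1) - vhat n‖ ^ 2 := by
      rw [Finset.sum_Icc_succ_top hn1]
      simp only [Nat.add_sub_cancel]
    have hEnn : 0 ≤ ‖u (n + 1) - u n‖ ^ 2 := by positivity
    have hco : Ll * (b (n + 1)) ^ 2 / B (n + 1) ≤ (σl * B n + 1) / 2 := by
      rw [div_le_div_iff₀ hB' (by norm_num : (0:ℝ) < 2)]
      linarith [hcoef n]
    have hBmul : B (n + 1) * l (vhat n) = B n * l (vhat n) + b (n + 1) * l (vhat n) := by
      rw [hbB]; ring
    have chain1 : B (n + 1) * l (v (n + 1)) + (Ll * B (n + 1) / 2) * ‖v (n + 1) - vhat n‖ ^ 2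
        ≤ B (n + 1) * l (vhat n) + b (n + 1) * ⟪l' (vhat n), u (n + 1) - u n⟫
          + (σl * B n + 1) / 2 * ‖u (n + 1) - u n‖ ^ 2 := by
      have hstep : l (v (n + 1)) + (Ll / 2) * ‖v (n + 1) - vhat n‖ ^ 2
          ≤ l (vhat n) + (b (n + 1) / B (n + 1)) * ⟪l' (vhat n), u (n + 1) - u n⟫
            + Ll * (b (n + 1) / B (n + 1)) ^ 2 * ‖u (n + 1) - u n‖ ^ 2 := by
        rw [hw0in, hw0norm] at hvm
        have hsub2 : ⟪l' (vhat n), v (n + 1) - vhat n⟫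
            = ⟪l' (vhat n), v (n + 1)⟫ - ⟪l' (vhat n), vhat n⟫ := inner_sub_right _ _ _
        linarith [hdes, hvm, hsub2]
      have hmul := mul_le_mul_of_nonneg_left hstep hB'.le
      have hA : B (n + 1) * ((b (n + 1) / B (n + 1)) * ⟪l' (vhat n), u (n + 1) - u n⟫)
          = b (n + 1) * ⟪l' (vhat n), u (n + 1) - u n⟫ := by field_simp
      have hB2 : B (n + 1) * (Ll * (b (n + 1) / B (n + 1)) ^ 2 * ‖u (n + 1) - u n‖ ^ 2)
          = (Ll * (b (n + 1)) ^ 2 / B (n + 1)) * ‖u (n + 1) - u n‖ ^ 2 := by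
        field_simp
      have hcoE : (Ll * (b (n + 1)) ^ 2 / B (n + 1)) * ‖u (n + 1) - u n‖ ^ 2
          ≤ (σl * B n + 1) / 2 * ‖u (n + 1) - u n‖ ^ 2 :=
        mul_le_mul_of_nonneg_right hco hEnn
      linarith [hmul, hA, hB2, hcoE]
    have chain2 : B (n + 1) * l (vhat n) + b (n + 1) * ⟪l' (vhat n), u (n + 1) - u n⟫
          + (σl * B n + 1) / 2 * ‖u (n + 1) - u n‖ ^ 2
          + (∑ i ∈ Finset.Icc 1 n, (Ll * B i / 2) * ‖v i - vhat (i - 1)‖ ^ 2)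
        ≤ φ (n + 1) (u (n + 1)) := by
      have hq : 0 ≤ b (n + 1) * ((σl / 2) * ‖u (n + 1) - vhat n‖ ^ 2) := by positivity
      have hscm := mul_le_mul_of_nonneg_left hsc (hBnn n)
      linarith [hsplit, hsm, ih, hscm, hinid, hq, hBmul]
    rw [hSsplit]
    linarith [chain1, chain2]
end

section
/- For each i ≥ 1, the one-step estimate holds: φ_i(u_i) − φ_{i−1}(u_{i−1}) ≥ B_i l(v_i) − B_{i−1} l(v_{i−1}) + (L_l B_i / 2) ‖v_i − v̂_{i−1}‖². -/
open scoped RealInnerProductSpace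

lemma quad_combo {V : Type*} [NormedAddCommGroup V] [InnerProductSpace ℝ V]
    (w z p : V) (t : ℝ) :
    ‖(t • w + (1 - t) • z) - p‖ ^ 2
      = t * ‖w - p‖ ^ 2 + (1 - t) * ‖z - p‖ ^ 2 - t * (1 - t) * ‖w - z‖ ^ 2 := by
  have h : (t • w + (1 - t) • z) - p = t • (w - p) + (1 - t) • (z - p) := by module
  have hwz : w - z = (w - p) - (z - p) := by abel
  have e : ∀ x : V, ‖x‖ ^ 2 = ⟪x, x⟫ := fun x => (real_inner_self_eq_norm_sq x).symm
  rw [h, hwz]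
  generalize w - p = a
  generalize z - p = c
  simp only [e, real_inner_add_add_self, real_inner_sub_sub_self, real_inner_smul_left,
    real_inner_smul_right]
  ring

lemma descent_lemma {V : Type*} [NormedAddCommGroup V] [InnerProductSpace ℝ V] [CompleteSpace V]
    (l : V → ℝ) (l' : V → V) (L : ℝ)
    (hd : ∀ x, HasGradientAt l (l' x) x)
    (hlip : ∀ x y, ‖l' x - l' y‖ ≤ L * ‖x - y‖)
    (x y : V) : l y ≤ l x + ⟪l' x, y - x⟫ + (L / 2) * ‖y - x‖ ^ 2 := by
  set d := y - x with hdd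
  set F : ℝ → ℝ := fun t => l (x + t • d) - t * ⟪l' x, d⟫ - (L * ‖d‖ ^ 2 / 2) * t ^ 2 with hF
  have hg : ∀ t : ℝ, HasDerivAt (fun s : ℝ => l (x + s • d)) ⟪l' (x + t • d), d⟫ t := by
    intro t
    have h1 : HasDerivAt (fun s : ℝ => x + s • d) d t := by
      simpa using ((hasDerivAt_id t).smul_const d).const_add x
    have h2 := (hd (x + t • d)).hasFDerivAt
    have := h2.comp_hasDerivAt t h1
    simp at this; exact this
  have hFd : ∀ t : ℝ, HasDerivAt F (⟪l' (x + t • d), d⟫ - ⟪l' x, d⟫ - L * ‖d‖ ^ 2 * t) t := by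
    intro t
    have h1 : HasDerivAt (fun s : ℝ => s * ⟪l' x, d⟫) ⟪l' x, d⟫ t := by
      simpa using (hasDerivAt_id t).mul_const ⟪l' x, d⟫
    have h2 : HasDerivAt (fun s : ℝ => (L * ‖d‖ ^ 2 / 2) * s ^ 2)
        ((L * ‖d‖ ^ 2 / 2) * (2 * t)) t := by
      simpa using (hasDerivAt_pow 2 t).const_mul (L * ‖d‖ ^ 2 / 2)
    have := ((hg t).sub h1).sub h2
    exact this.congr_deriv (by ring)
  have hdiff : Differentiable ℝ F := fun t => (hFd t).differentiableAt
  have hanti : AntitoneOn F (Set.Icc (0 : ℝ) 1) := by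
    apply antitoneOn_of_deriv_nonpos (convex_Icc 0 1) hdiff.continuous.continuousOn
      hdiff.differentiableOn
    intro t ht
    rw [interior_Icc] at ht
    rw [(hFd t).deriv]
    have h3 : ⟪l' (x + t • d), d⟫ - ⟪l' x, d⟫ = ⟪l' (x + t • d) - l' x, d⟫ := by
      rw [inner_sub_left]
    have h4 : ⟪l' (x + t • d) - l' x, d⟫ ≤ ‖l' (x + t • d) - l' x‖ * ‖d‖ :=
      real_inner_le_norm _ _
    have h5 : ‖l' (x + t • d) - l' x‖ ≤ L * ‖x + t • d - x‖ := hlip _ _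
    have h6 : ‖x + t • d - x‖ = t * ‖d‖ := by
      rw [add_sub_cancel_left, norm_smul, Real.norm_eq_abs, abs_of_pos ht.1]
    have h7 : ‖l' (x + t • d) - l' x‖ * ‖d‖ ≤ (L * (t * ‖d‖)) * ‖d‖ := by
      apply mul_le_mul_of_nonneg_right _ (norm_nonneg d)
      rw [← h6]; exact h5
    nlinarith [norm_nonneg d]
  have h01 := hanti (Set.left_mem_Icc.2 zero_le_one) (Set.right_mem_Icc.2 zero_le_one) zero_le_one
  have hF0 : F 0 = l x := by simp [hF]
  have hF1 : F 1 = l y - ⟪l' x, d⟫ - L * ‖d‖ ^ 2 / 2 := by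
    simp [hF, hdd]
  rw [hF0, hF1] at h01
  linarith


lemma aux_strong (m C aw au : ℝ) (hm : 1 ≤ m) (hC : 0 ≤ C)
    (hmin : ∀ lam : ℝ, 0 ≤ lam → lam ≤ 1 →
      au ≤ lam * aw + (1 - lam) * au - m / 2 * lam * (1 - lam) * C) :
    au + m / 2 * C ≤ aw := by
  by_contra hcon
  push_neg at hcon
  rcases eq_or_lt_of_le hC with hC0 | hCpos
  · have h1 := hmin 1 zero_le_one le_rfl
    have h2 : m / 2 * C = 0 := by rw [← hC0]; ring
    nlinarith
  · have hd : 0 < au + m / 2 * C - aw := by linarith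
    have hmC : 0 < m * C := by nlinarith
    set lam := min 1 ((au + m / 2 * C - aw) / (m * C)) with hlamdef
    have hlam0 : 0 < lam := lt_min one_pos (div_pos hd hmC)
    have hlam1 : lam ≤ 1 := min_le_left _ _
    have h := hmin lam hlam0.le hlam1
    have hlam2 : lam * (m * C) ≤ au + m / 2 * C - aw := by
      have h3 := min_le_right 1 ((au + m / 2 * C - aw) / (m * C))
      calc lam * (m * C) ≤ (au + m / 2 * C - aw) / (m * C) * (m * C) :=
            mul_le_mul_of_nonneg_right h3 hmC.le
        _ = au + m / 2 * C - aw := div_mul_cancel₀ _ hmC.ne'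
    nlinarith [mul_pos hlam0 hd, mul_le_mul_of_nonneg_left hlam2 hlam0.le]

set_option maxHeartbeats 2000000 in
/-- For each `i ≥ 1`, the one-step estimate holds:
`φ_i(u_i) − φ_{i−1}(u_{i−1}) ≥ B_i l(v_i) − B_{i−1} l(v_{i−1}) + (L_l B_i / 2)‖v_i − v̂_{i−1}‖²`. -/
theorem pagd_one_step_estimate
    {V : Type*} [NormedAddCommGroup V] [InnerProductSpace ℝ V] [CompleteSpace V]
    (𝒱 : Set V) (hVconv : Convex ℝ 𝒱)
    (σl Ll : ℝ) (hσ : 0 < σl) (hσL : σl ≤ Ll)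
    (l : V → ℝ) (l' : V → V)
    (hldiff : ∀ x : V, HasGradientAt l (l' x) x)
    (hlstrong : ∀ x y : V, l x + ⟪l' x, y - x⟫ + (σl / 2) * ‖y - x‖ ^ 2 ≤ l y)
    (hlLip : ∀ x y : V, ‖l' x - l' y‖ ≤ Ll * ‖x - y‖)
    (B b : ℕ → ℝ)
    (hB0 : B 0 = 0)
    (hB : ∀ t : ℕ, 1 ≤ t →
      B t = (1 / (2 * Ll)) * (1 + Real.sqrt (σl / (2 * Ll))) ^ (t - 1))
    (hb : ∀ t : ℕ, 1 ≤ t → b t = B t - B (t - 1))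
    (v u vhat : ℕ → V)
    (hv0u0 : v 0 = u 0)
    (hvX : ∀ t, v t ∈ 𝒱) (huX : ∀ t, u t ∈ 𝒱) (hvhatX : ∀ t, vhat t ∈ 𝒱)
    (hvhat : ∀ t : ℕ, 1 ≤ t →
      vhat (t - 1) = (B (t - 1) / B t) • v (t - 1) + (b t / B t) • u (t - 1))
    (hvmin : ∀ t : ℕ, 1 ≤ t → ∀ w ∈ 𝒱,
      ⟪l' (vhat (t - 1)), v t⟫ + Ll * ‖v t - vhat (t - 1)‖ ^ 2
        ≤ ⟪l' (vhat (t - 1)), w⟫ + Ll * ‖w - vhat (t - 1)‖ ^ 2)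
    (φ : ℕ → V → ℝ)
    (hφ : ∀ (t : ℕ) (w : V), φ t w =
      (∑ i ∈ Finset.Icc 1 t,
        b i * (l (vhat (i - 1)) + ⟪l' (vhat (i - 1)), w - vhat (i - 1)⟫
          + (σl / 2) * ‖w - vhat (i - 1)‖ ^ 2)) + (1 / 2) * ‖w - v 0‖ ^ 2)
    (humin : ∀ (t : ℕ), ∀ w ∈ 𝒱, φ t (u t) ≤ φ t w)
    (hBb : ∀ t : ℕ, 1 ≤ t → (1 + σl * B (t - 1)) * B t ≥ 2 * Ll * b t ^ 2)
    (i : ℕ) (hi : 1 ≤ i) :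
    φ i (u i) - φ (i - 1) (u (i - 1))
      ≥ B i * l (v i) - B (i - 1) * l (v (i - 1)) + (Ll * B i / 2) * ‖v i - vhat (i - 1)‖ ^ 2 := by
  obtain ⟨j, rfl⟩ : ∃ j, i = j + 1 := ⟨i - 1, (Nat.succ_pred_eq_of_pos hi).symm⟩
  simp only [Nat.add_sub_cancel]
  -- basic positivity
  have hL : 0 < Ll := lt_of_lt_of_le hσ hσL
  have hq : (1 : ℝ) ≤ 1 + Real.sqrt (σl / (2 * Ll)) :=
    le_add_of_nonneg_right (Real.sqrt_nonneg _)
  have hBpos : ∀ t : ℕ, 1 ≤ t → 0 < B t := by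
    intro t ht
    rw [hB t ht]
    have h1 : (0:ℝ) < 1 / (2 * Ll) := by positivity
    have h2 : (0:ℝ) < (1 + Real.sqrt (σl / (2 * Ll))) ^ (t - 1) := by positivity
    positivity
  have hBnn : ∀ t : ℕ, 0 ≤ B t := by
    intro t
    rcases Nat.eq_zero_or_pos t with h | h
    · simp [h, hB0]
    · exact (hBpos t h).le
  have hBn : 0 < B (j + 1) := hBpos (j + 1) (by omega)
  have hBne : B (j + 1) ≠ 0 := ne_of_gt hBn
  have hBmono : B j ≤ B (j + 1) := by
    rcases Nat.eq_zero_or_pos j with h | h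
    · subst h; rw [hB0]; exact hBn.le
    · rw [hB j h, hB (j + 1) (by omega), Nat.add_sub_cancel]
      have : (1 + Real.sqrt (σl / (2 * Ll))) ^ (j - 1)
          ≤ (1 + Real.sqrt (σl / (2 * Ll))) ^ j :=
        pow_le_pow_right₀ hq (Nat.sub_le j 1)
      have h1 : (0:ℝ) ≤ 1 / (2 * Ll) := by positivity
      exact mul_le_mul_of_nonneg_left this h1
  have hb' : b (j + 1) = B (j + 1) - B j := by
    rw [hb (j + 1) (by omega), Nat.add_sub_cancel]
  have hbnn : 0 ≤ b (j + 1) := by rw [hb']; linarith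
  -- telescoping sum
  have hsum : ∀ t : ℕ, ∑ k ∈ Finset.Icc 1 t, b k = B t := by
    intro t
    induction t with
    | zero => simp [hB0]
    | succ n ih =>
      rw [Finset.sum_Icc_succ_top (by omega : 1 ≤ n + 1), ih, hb (n + 1) (by omega),
        Nat.add_sub_cancel]
      ring
  -- quadratic identity for φ
  have hphiid : ∀ (t : ℕ) (lam : ℝ) (w z : V),
      φ t (lam • w + (1 - lam) • z)
        = lam * φ t w + (1 - lam) * φ t z
          - ((1 + σl * B t) / 2) * lam * (1 - lam) * ‖w - z‖ ^ 2 := by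
    intro t lam w z
    rw [hφ, hφ, hφ]
    have key : ∀ k ∈ Finset.Icc 1 t,
        b k * (l (vhat (k - 1)) + ⟪l' (vhat (k - 1)), (lam • w + (1 - lam) • z) - vhat (k - 1)⟫
          + (σl / 2) * ‖(lam • w + (1 - lam) • z) - vhat (k - 1)‖ ^ 2)
        = lam * (b k * (l (vhat (k - 1)) + ⟪l' (vhat (k - 1)), w - vhat (k - 1)⟫
            + (σl / 2) * ‖w - vhat (k - 1)‖ ^ 2))
          + (1 - lam) * (b k * (l (vhat (k - 1)) + ⟪l' (vhat (k - 1)), z - vhat (k - 1)⟫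
            + (σl / 2) * ‖z - vhat (k - 1)‖ ^ 2))
          - (σl / 2 * lam * (1 - lam) * ‖w - z‖ ^ 2) * b k := by
      intro k _
      have hx : (lam • w + (1 - lam) • z) - vhat (k - 1)
          = lam • (w - vhat (k - 1)) + (1 - lam) • (z - vhat (k - 1)) := by module
      have hinner : ⟪l' (vhat (k - 1)), (lam • w + (1 - lam) • z) - vhat (k - 1)⟫
          = lam * ⟪l' (vhat (k - 1)), w - vhat (k - 1)⟫
            + (1 - lam) * ⟪l' (vhat (k - 1)), z - vhat (k - 1)⟫ := by
        rw [hx, inner_add_right, real_inner_smul_right, real_inner_smul_right]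
      rw [hinner, quad_combo]
      ring
    rw [Finset.sum_congr rfl key, Finset.sum_sub_distrib, Finset.sum_add_distrib,
      ← Finset.mul_sum, ← Finset.mul_sum, ← Finset.mul_sum, hsum, quad_combo]
    ring
  -- strong minimality of u t
  have hstrongmin : ∀ (t : ℕ) (w : V), w ∈ 𝒱 →
      φ t (u t) + (1 + σl * B t) / 2 * ‖w - u t‖ ^ 2 ≤ φ t w := by
    intro t w hw
    have hm : (1:ℝ) ≤ 1 + σl * B t := by nlinarith [mul_nonneg hσ.le (hBnn t)]
    have hC : (0:ℝ) ≤ ‖w - u t‖ ^ 2 := by positivity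
    have := aux_strong (1 + σl * B t) (‖w - u t‖ ^ 2) (φ t w) (φ t (u t)) hm hC ?_
    · linarith
    · intro lam h0 h1
      have hmem : lam • w + (1 - lam) • u t ∈ 𝒱 :=
        hVconv hw (huX t) h0 (by linarith) (by ring)
      have h2 := humin t _ hmem
      rw [hphiid t lam w (u t)] at h2
      linarith
  -- notation-free final assembly
  -- Step A: recursion for φ
  have hA : ∀ w : V, φ (j + 1) w = φ j w
      + b (j + 1) * l (vhat j) + b (j + 1) * ⟪l' (vhat j), w - vhat j⟫
      + b (j + 1) * (σl / 2) * ‖w - vhat j‖ ^ 2 := by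
    intro w
    rw [hφ (j + 1) w, hφ j w, Finset.sum_Icc_succ_top (by omega : 1 ≤ j + 1),
      Nat.add_sub_cancel]
    ring
  -- Step B: strong minimality at u (j+1)
  have hsm := hstrongmin j (u (j + 1)) (huX (j + 1))
  -- Step C: descent lemma, scaled by B (j+1)
  have hdes := descent_lemma l l' Ll hldiff hlLip (vhat j) (v (j + 1))
  have hdes' : B (j + 1) * l (v (j + 1)) ≤ B (j + 1) * l (vhat j)
      + B (j + 1) * ⟪l' (vhat j), v (j + 1) - vhat j⟫
      + B (j + 1) * (Ll / 2) * ‖v (j + 1) - vhat j‖ ^ 2 := by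
    nlinarith [mul_le_mul_of_nonneg_left hdes hBn.le]
  -- Step D: convexity at v j, scaled by B j
  have hcvx : B j * l (vhat j) + B j * ⟪l' (vhat j), v j - vhat j⟫ ≤ B j * l (v j) := by
    have h1 := hlstrong (vhat j) (v j)
    have h2 : 0 ≤ σl / 2 * ‖v j - vhat j‖ ^ 2 := by positivity
    nlinarith [mul_le_mul_of_nonneg_left (show l (vhat j) + ⟪l' (vhat j), v j - vhat j⟫ ≤ l (v j)
      by linarith) (hBnn j)]
  -- Step E: hat point identity
  have hhat := hvhat (j + 1) (by omega)
  rw [Nat.add_sub_cancel] at hhat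
  have hhat' : B (j + 1) • vhat j = B j • v j + b (j + 1) • u j := by
    rw [hhat, smul_add, smul_smul, smul_smul]
    congr 2
    · field_simp
    · field_simp
  have hvjp : B j • (v j - vhat j) = b (j + 1) • (vhat j - u j) := by
    have h1 := hhat'
    rw [hb'] at h1 ⊢
    have h2 : B j • v j = B (j + 1) • vhat j - (B (j + 1) - B j) • u j := by
      rw [h1]; module
    rw [smul_sub, h2]
    module
  have hinner1 : B j * ⟪l' (vhat j), v j - vhat j⟫
      = -(b (j + 1) * ⟪l' (vhat j), u j - vhat j⟫) := by
    have h1 := congrArg (fun z : V => ⟪l' (vhat j), z⟫) hvjp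
    simp only [real_inner_smul_right] at h1
    have h2 : (⟪l' (vhat j), vhat j - u j⟫ : ℝ) = -⟪l' (vhat j), u j - vhat j⟫ := by
      rw [show vhat j - u j = -(u j - vhat j) by abel, inner_neg_right]
    rw [h1, h2]; ring
  -- Step F: optimality of v (j+1) against the auxiliary point
  have hrw : vhat j + (b (j + 1) / B (j + 1)) • (u (j + 1) - u j)
      = (B j / B (j + 1)) • v j + (b (j + 1) / B (j + 1)) • u (j + 1) := by
    rw [hhat]; module
  have hw'mem : vhat j + (b (j + 1) / B (j + 1)) • (u (j + 1) - u j) ∈ 𝒱 := by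
    rw [hrw]
    refine hVconv (hvX j) (huX (j + 1)) (div_nonneg (hBnn j) hBn.le)
      (div_nonneg hbnn hBn.le) ?_
    rw [← add_div, hb']
    field_simp
    ring
  have hmin := hvmin (j + 1) (by omega) _ hw'mem
  rw [Nat.add_sub_cancel] at hmin
  have hmin2 : ⟪l' (vhat j), v (j + 1) - vhat j⟫ + Ll * ‖v (j + 1) - vhat j‖ ^ 2
      ≤ (b (j + 1) / B (j + 1)) * ⟪l' (vhat j), u (j + 1) - u j⟫
        + Ll * (b (j + 1) / B (j + 1)) ^ 2 * ‖u (j + 1) - u j‖ ^ 2 := by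
    have e1 : (⟪l' (vhat j), vhat j + (b (j + 1) / B (j + 1)) • (u (j + 1) - u j)⟫ : ℝ)
        = ⟪l' (vhat j), vhat j⟫ + (b (j + 1) / B (j + 1)) * ⟪l' (vhat j), u (j + 1) - u j⟫ := by
      rw [inner_add_right, real_inner_smul_right]
    have e2 : ‖vhat j + (b (j + 1) / B (j + 1)) • (u (j + 1) - u j) - vhat j‖ ^ 2
        = (b (j + 1) / B (j + 1)) ^ 2 * ‖u (j + 1) - u j‖ ^ 2 := by
      rw [add_sub_cancel_left, norm_smul, mul_pow, Real.norm_eq_abs, sq_abs]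
    rw [e1, e2] at hmin
    have e3 : (⟪l' (vhat j), v (j + 1)⟫ : ℝ)
        = ⟪l' (vhat j), v (j + 1) - vhat j⟫ + ⟪l' (vhat j), vhat j⟫ := by
      rw [← inner_add_right]; congr 1; abel
    rw [e3] at hmin
    linarith
  have hminS : B (j + 1) * ⟪l' (vhat j), v (j + 1) - vhat j⟫
      + B (j + 1) * Ll * ‖v (j + 1) - vhat j‖ ^ 2
      ≤ b (j + 1) * ⟪l' (vhat j), u (j + 1) - u j⟫
        + Ll * b (j + 1) ^ 2 / B (j + 1) * ‖u (j + 1) - u j‖ ^ 2 := by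
    have h1 := mul_le_mul_of_nonneg_left hmin2 hBn.le
    have e1 : B (j + 1) * ((b (j + 1) / B (j + 1)) * ⟪l' (vhat j), u (j + 1) - u j⟫
        + Ll * (b (j + 1) / B (j + 1)) ^ 2 * ‖u (j + 1) - u j‖ ^ 2)
        = b (j + 1) * ⟪l' (vhat j), u (j + 1) - u j⟫
          + Ll * b (j + 1) ^ 2 / B (j + 1) * ‖u (j + 1) - u j‖ ^ 2 := by
      field_simp
    rw [e1] at h1
    nlinarith [h1]
  -- Step G: coefficient inequality
  have hBb' := hBb (j + 1) (by omega)
  rw [Nat.add_sub_cancel] at hBb'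
  have hG : Ll * b (j + 1) ^ 2 / B (j + 1) * ‖u (j + 1) - u j‖ ^ 2
      ≤ (1 + σl * B j) / 2 * ‖u (j + 1) - u j‖ ^ 2 := by
    have h1 : Ll * b (j + 1) ^ 2 / B (j + 1) ≤ (1 + σl * B j) / 2 := by
      rw [div_le_div_iff₀ hBn two_pos]
      nlinarith
    exact mul_le_mul_of_nonneg_right h1 (by positivity)
  -- splitting inner products
  have hsplit : (⟪l' (vhat j), u (j + 1) - vhat j⟫ : ℝ)
      = ⟪l' (vhat j), u (j + 1) - u j⟫ + ⟪l' (vhat j), u j - vhat j⟫ := by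
    rw [← inner_add_right]; congr 1; abel
  -- drop the σ-term
  have hdrop : 0 ≤ b (j + 1) * (σl / 2) * ‖u (j + 1) - vhat j‖ ^ 2 := by positivity
  -- l p coefficient relation
  have hlp : b (j + 1) * l (vhat j) = B (j + 1) * l (vhat j) - B j * l (vhat j) := by
    rw [hb']; ring
  have hAu := hA (u (j + 1))
  rw [hsplit] at hAu
  linarith [hsm, hAu, hdes', hcvx, hinner1, hminS, hG, hdrop, hlp]
end

section
/- If v⁺ ∈ 𝒱 satisfies the first-order optimality condition of a projected gradient step from v̂, i.e. ⟨∇l(v̂) + 2L_l(v⁺ − v̂), v − v⁺⟩ ≥ 0 for all v ∈ 𝒱, then for all v ∈ 𝒱 one has ⟨∇l(v⁺), v⁺ − v⟩ ≤ 3 L_l ‖v⁺ − v̂‖ · ‖v⁺ − v‖. -/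
open scoped RealInnerProductSpace

/-- If `v⁺ ∈ 𝒱` satisfies the first-order optimality condition of a
projected gradient step from `v̂`, i.e. `⟪∇l(v̂) + 2L_l(v⁺ − v̂), v − v⁺⟫ ≥ 0` for all
`v ∈ 𝒱`, then for all `v ∈ 𝒱` one has
`⟪∇l(v⁺), v⁺ − v⟫ ≤ 3 L_l ‖v⁺ − v̂‖ · ‖v⁺ − v‖`. -/
theorem projected_gradient_step_bound
    {V : Type*} [NormedAddCommGroup V] [InnerProductSpace ℝ V] [CompleteSpace V]
    (𝒱 : Set V) (hVconv : Convex ℝ 𝒱)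
    (Ll : ℝ) (hLl : 0 < Ll)
    (l : V → ℝ) (l' : V → V)
    (hldiff : ∀ x : V, HasGradientAt l (l' x) x)
    (hlLip : ∀ x y : V, ‖l' x - l' y‖ ≤ Ll * ‖x - y‖)
    (vhat : V)
    (vp : V) (hvp : vp ∈ 𝒱)
    (hopt : ∀ v ∈ 𝒱, ⟪l' vhat + (2 * Ll) • (vp - vhat), v - vp⟫ ≥ 0) :
    ∀ v ∈ 𝒱, ⟪l' vp, vp - v⟫ ≤ 3 * Ll * ‖vp - vhat‖ * ‖vp - v‖ := by
  intro v hv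
  have h1 : ⟪l' vp - l' vhat, vp - v⟫ ≤ Ll * ‖vp - vhat‖ * ‖vp - v‖ := by
    calc ⟪l' vp - l' vhat, vp - v⟫ ≤ ‖l' vp - l' vhat‖ * ‖vp - v‖ :=
          real_inner_le_norm _ _
      _ ≤ (Ll * ‖vp - vhat‖) * ‖vp - v‖ := by
          gcongr
          exact hlLip vp vhat
      _ = Ll * ‖vp - vhat‖ * ‖vp - v‖ := by ring
  have h2 : ⟪l' vhat, vp - v⟫ ≤ 2 * Ll * ‖vp - vhat‖ * ‖vp - v‖ := by
    have ho := hopt v hv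
    have hinner : ⟪l' vhat, v - vp⟫ + (2 * Ll) * ⟪vp - vhat, v - vp⟫ ≥ 0 := by
      rwa [inner_add_left, real_inner_smul_left] at ho
    have hcs : -(‖vp - vhat‖ * ‖vp - v‖) ≤ ⟪vp - vhat, vp - v⟫ := neg_le_of_abs_le (abs_real_inner_le_norm _ _)
    have hflip : ⟪l' vhat, vp - v⟫ = -⟪l' vhat, v - vp⟫ := by
      rw [← inner_neg_right]; congr 1; abel
    have hflip2 : ⟪vp - vhat, v - vp⟫ = -⟪vp - vhat, vp - v⟫ := by
      rw [← inner_neg_right]; congr 1; abel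
    rw [hflip2] at hinner
    rw [hflip]
    nlinarith [mul_le_mul_of_nonneg_left hcs (by positivity : (0:ℝ) ≤ 2 * Ll)]
  have key : ⟪l' vp, vp - v⟫ = ⟪l' vp - l' vhat, vp - v⟫ + ⟪l' vhat, vp - v⟫ := by
    rw [inner_sub_left]; ring
  rw [key]
  nlinarith [h1, h2]
end

section
/- If v⁺ ∈ 𝒱 satisfies the first-order optimality condition of a projected gradient step from v̂, i.e. ⟨∇l(v̂) + 2L_l(v⁺ − v̂), v − v⁺⟩ ≥ 0 for all v ∈ 𝒱, and v* is a minimizer of l over 𝒱 (so ⟨∇l(v*), v − v*⟩ ≥ 0 for all v ∈ 𝒱), then ‖v⁺ − v*‖ ≤ (3 L_l / σ_l) ‖v⁺ − v̂‖. -/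
open scoped RealInnerProductSpace

/-- If `v⁺ ∈ 𝒱` satisfies the first-order optimality condition of a
projected gradient step from `v̂`, and `v*` is a minimizer of `l` over `𝒱`
(so `⟪∇l(v*), v − v*⟫ ≥ 0` for all `v ∈ 𝒱`), then
`‖v⁺ − v*‖ ≤ (3 L_l / σ_l) ‖v⁺ − v̂‖`. -/
theorem projected_gradient_step_distance_bound
    {V : Type*} [NormedAddCommGroup V] [InnerProductSpace ℝ V] [CompleteSpace V]
    (𝒱 : Set V) (hVconv : Convex ℝ 𝒱)
    (σl Ll : ℝ) (hσ : 0 < σl) (hσL : σl ≤ Ll)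
    (l : V → ℝ) (l' : V → V)
    (hldiff : ∀ x : V, HasGradientAt l (l' x) x)
    (hlstrong : ∀ x y : V, l x + ⟪l' x, y - x⟫ + (σl / 2) * ‖y - x‖ ^ 2 ≤ l y)
    (hlLip : ∀ x y : V, ‖l' x - l' y‖ ≤ Ll * ‖x - y‖)
    (vhat : V)
    (vp : V) (hvp : vp ∈ 𝒱)
    (hopt : ∀ v ∈ 𝒱, ⟪l' vhat + (2 * Ll) • (vp - vhat), v - vp⟫ ≥ 0)
    (vst : V) (hvstX : vst ∈ 𝒱) (hvstmin : ∀ w ∈ 𝒱, l vst ≤ l w)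
    (hvstopt : ∀ v ∈ 𝒱, ⟪l' vst, v - vst⟫ ≥ 0) :
    ‖vp - vst‖ ≤ (3 * Ll / σl) * ‖vp - vhat‖ := by
  have hLl : 0 < Ll := lt_of_lt_of_le hσ hσL
  -- strong monotonicity
  have h1 := hlstrong vp vst
  have h2 := hlstrong vst vp
  have hnormsym : ‖vst - vp‖ = ‖vp - vst‖ := by rw [norm_sub_rev]
  have hinner1 : ⟪l' vp, vst - vp⟫ = -⟪l' vp, vp - vst⟫ := by
    rw [← inner_neg_right]; congr 1; abel
  have hmono : σl * ‖vp - vst‖ ^ 2 ≤ ⟪l' vp, vp - vst⟫ - ⟪l' vst, vp - vst⟫ := by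
    rw [hnormsym, hinner1] at h1
    nlinarith [h1, h2]
  -- optimality at vst
  have hA : (0:ℝ) ≤ ⟪l' vst, vp - vst⟫ := hvstopt vp hvp
  -- optimality at vp
  have hB := hopt vst hvstX
  have hBneg : ⟪l' vhat + (2 * Ll) • (vp - vhat), vp - vst⟫ ≤ 0 := by
    have : ⟪l' vhat + (2 * Ll) • (vp - vhat), vp - vst⟫
        = -⟪l' vhat + (2 * Ll) • (vp - vhat), vst - vp⟫ := by
      rw [← inner_neg_right]; congr 1; abel
    rw [this]; linarith [hB]
  -- split the inner product
  have hsplit : ⟪l' vp, vp - vst⟫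
      = ⟪l' vp - l' vhat, vp - vst⟫ - (2 * Ll) * ⟪vp - vhat, vp - vst⟫
        + ⟪l' vhat + (2 * Ll) • (vp - vhat), vp - vst⟫ := by
    rw [inner_sub_left, inner_add_left, real_inner_smul_left]; ring
  have hCS1 : ⟪l' vp - l' vhat, vp - vst⟫ ≤ ‖l' vp - l' vhat‖ * ‖vp - vst‖ :=
    real_inner_le_norm _ _
  have hCS2 : -⟪vp - vhat, vp - vst⟫ ≤ ‖vp - vhat‖ * ‖vp - vst‖ := by
    have := real_inner_le_norm (-(vp - vhat)) (vp - vst)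
    rwa [inner_neg_left, norm_neg] at this
  have hLip := hlLip vp vhat
  have hkey : σl * ‖vp - vst‖ ^ 2 ≤ 3 * Ll * ‖vp - vhat‖ * ‖vp - vst‖ := by
    nlinarith [hmono, hA, hBneg, hsplit, hCS1, hCS2, hLip, norm_nonneg (vp - vst)]
  rcases eq_or_lt_of_le (norm_nonneg (vp - vst)) with h0 | h0
  · rw [← h0]
    positivity
  · rw [div_mul_eq_mul_div, le_div_iff₀ hσ]
    nlinarith [hkey, h0]
end

section
/- Suppose ṽ, v̂, v_0 ∈ 𝒱, v* is a minimizer of l over 𝒱, c > 0, and S > 0 satisfy: (a) ⟨∇l(ṽ), ṽ − v⟩ ≤ 3 L_l ‖ṽ − v̂‖ · ‖ṽ − v‖ for all v ∈ 𝒱; (b) ‖ṽ − v*‖ ≤ (3 L_l / σ_l) ‖ṽ − v̂‖; (c) ‖ṽ − v̂‖ ≤ ‖v* − v_0‖ / √(L_l · S); and (d) S ≥ (3 √(L_l) (σ_l c² + 1) / σ_l)². Then for all v ∈ 𝒱, ⟨∇l(ṽ), ṽ − v⟩ ≤ (1/c²) ‖ṽ − v_0‖ · ‖ṽ − v‖;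 in particular ṽ satisfies the BAXG subproblem accuracy requirement ⟨∇l(ṽ), ṽ − v⟩ ≤ (2/c²) ‖ṽ − v_0‖ · ‖ṽ − v‖. -/
open scoped RealInnerProductSpace

/-- Suppose `ṽ, v̂, v₀ ∈ 𝒱`, `v*` is a minimizer of `l` over `𝒱`, `c > 0`
and `S > 0` satisfy: (a) `⟪∇l(ṽ), ṽ − v⟫ ≤ 3 L_l ‖ṽ − v̂‖·‖ṽ − v‖` for all `v ∈ 𝒱`;
(b) `‖ṽ − v*‖ ≤ (3 L_l / σ_l) ‖ṽ − v̂‖`; (c) `‖ṽ − v̂‖ ≤ ‖v* − v₀‖ / √(L_l S)`;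
(d) `S ≥ (3 √L_l (σ_l c² + 1) / σ_l)²`. Then for all `v ∈ 𝒱`,
`⟪∇l(ṽ), ṽ − v⟫ ≤ (1/c²) ‖ṽ − v₀‖·‖ṽ − v‖`; in particular
`⟪∇l(ṽ), ṽ − v⟫ ≤ (2/c²) ‖ṽ − v₀‖·‖ṽ − v‖`. -/
theorem pagd_subproblem_accuracy
    {V : Type*} [NormedAddCommGroup V] [InnerProductSpace ℝ V] [CompleteSpace V]
    (𝒱 : Set V) (hVconv : Convex ℝ 𝒱)
    (σl Ll : ℝ) (hσ : 0 < σl) (hσL : σl ≤ Ll)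
    (l : V → ℝ) (l' : V → V)
    (hldiff : ∀ x : V, HasGradientAt l (l' x) x)
    (hlstrong : ∀ x y : V, l x + ⟪l' x, y - x⟫ + (σl / 2) * ‖y - x‖ ^ 2 ≤ l y)
    (hlLip : ∀ x y : V, ‖l' x - l' y‖ ≤ Ll * ‖x - y‖)
    (vt vhat v0 : V) (hvt : vt ∈ 𝒱) (hvhat : vhat ∈ 𝒱) (hv0 : v0 ∈ 𝒱)
    (vst : V) (hvstX : vst ∈ 𝒱) (hvstmin : ∀ w ∈ 𝒱, l vst ≤ l w)
    (c S : ℝ) (hc : 0 < c) (hS : 0 < S)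
    (ha : ∀ v ∈ 𝒱, ⟪l' vt, vt - v⟫ ≤ 3 * Ll * ‖vt - vhat‖ * ‖vt - v‖)
    (hb : ‖vt - vst‖ ≤ (3 * Ll / σl) * ‖vt - vhat‖)
    (hcc : ‖vt - vhat‖ ≤ ‖vst - v0‖ / Real.sqrt (Ll * S))
    (hd : S ≥ (3 * Real.sqrt Ll * (σl * c ^ 2 + 1) / σl) ^ 2) :
    (∀ v ∈ 𝒱, ⟪l' vt, vt - v⟫ ≤ (1 / c ^ 2) * ‖vt - v0‖ * ‖vt - v‖) ∧
      (∀ v ∈ 𝒱, ⟪l' vt, vt - v⟫ ≤ (2 / c ^ 2) * ‖vt - v0‖ * ‖vt - v‖) := by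
  have hLl : 0 < Ll := lt_of_lt_of_le hσ hσL
  have hsLl : Real.sqrt Ll ^ 2 = Ll := Real.sq_sqrt hLl.le
  have hsqS : 3 * Real.sqrt Ll * (σl * c ^ 2 + 1) / σl ≤ Real.sqrt S := by
    calc 3 * Real.sqrt Ll * (σl * c ^ 2 + 1) / σl
        = Real.sqrt ((3 * Real.sqrt Ll * (σl * c ^ 2 + 1) / σl) ^ 2) :=
          (Real.sqrt_sq (by positivity)).symm
      _ ≤ Real.sqrt S := Real.sqrt_le_sqrt hd
  have hLS : 0 < Real.sqrt (Ll * S) := Real.sqrt_pos.mpr (by positivity)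
  have hLSsplit : Real.sqrt (Ll * S) = Real.sqrt Ll * Real.sqrt S :=
    Real.sqrt_mul hLl.le S
  have hkey : 3 * Ll * (σl * c ^ 2 + 1) / σl ≤ Real.sqrt (Ll * S) := by
    rw [hLSsplit]
    calc 3 * Ll * (σl * c ^ 2 + 1) / σl
        = Real.sqrt Ll * (3 * Real.sqrt Ll * (σl * c ^ 2 + 1) / σl) := by
          have m : Real.sqrt Ll * Real.sqrt Ll = Ll := Real.mul_self_sqrt hLl.le
          linear_combination (-(3 * (σl * c ^ 2 + 1) / σl)) * m
      _ ≤ Real.sqrt Ll * Real.sqrt S :=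
          mul_le_mul_of_nonneg_left hsqS (Real.sqrt_nonneg _)
  set h := ‖vt - vhat‖ with hh
  have hhn : 0 ≤ h := norm_nonneg _
  have hcc' : Real.sqrt (Ll * S) * h ≤ ‖vst - v0‖ := by
    rw [le_div_iff₀ hLS] at hcc
    linarith
  have htri : ‖vst - v0‖ ≤ ‖vt - vst‖ + ‖vt - v0‖ := by
    have := norm_sub_le_norm_sub_add_norm_sub vst vt v0
    have h2 : ‖vst - vt‖ = ‖vt - vst‖ := norm_sub_rev _ _
    linarith
  have hmain : 3 * Ll * c ^ 2 * h ≤ ‖vt - v0‖ := by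
    have h1 : Real.sqrt (Ll * S) * h ≤ ‖vt - vst‖ + ‖vt - v0‖ :=
      le_trans hcc' htri
    have h2 : (3 * Ll * (σl * c ^ 2 + 1) / σl) * h ≤ Real.sqrt (Ll * S) * h :=
      mul_le_mul_of_nonneg_right hkey hhn
    have h3 : 3 * Ll * (σl * c ^ 2 + 1) / σl = 3 * Ll * c ^ 2 + 3 * Ll / σl := by
      field_simp
    nlinarith [hb]
  have hfirst : ∀ v ∈ 𝒱, ⟪l' vt, vt - v⟫ ≤ (1 / c ^ 2) * ‖vt - v0‖ * ‖vt - v‖ := by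
    intro v hv
    refine le_trans (ha v hv) ?_
    have hnn : (0:ℝ) ≤ ‖vt - v‖ := norm_nonneg _
    have : 3 * Ll * h ≤ (1 / c ^ 2) * ‖vt - v0‖ := by
      rw [div_mul_eq_mul_div, le_div_iff₀ (by positivity)]
      nlinarith
    nlinarith
  refine ⟨hfirst, fun v hv => le_trans (hfirst v hv) ?_⟩
  have h12 : (1:ℝ) / c ^ 2 ≤ 2 / c ^ 2 := by
    rw [div_le_div_iff₀ (by positivity) (by positivity)]; nlinarith
  exact mul_le_mul_of_nonneg_right
    (mul_le_mul_of_nonneg_right h12 (norm_nonneg _)) (norm_nonneg _)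
end
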